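/- arXiv:2407.09671 — 3 statements merged into one kernel-verified Lean document; each statement's English description precedes it below -/
import Mathlib

section
/- Let H be a nonempty proper minor-closed graph class. For every graph G, the H-treewidth H-tw(G) is equal to the minimum width of an H-tree decomposition of G. (Lemma 11.1) -/
open SimpleGraph

set_option autoImplicit false

/-- `H` is a minor of `G`: the standard branch-set (minor model) definition. -/
def SimpleGraph.IsMinorOf {W V : Type} (H : SimpleGraph W) (G : SimpleGraph V) : Prop :=
  ∃ φ : W → Set V,
    (∀ w, (φ w).Nonempty) ∧
    (∀ w, (G.induce (φ w)).Connected) ∧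
    (∀ w₁ w₂, w₁ ≠ w₂ → Disjoint (φ w₁) (φ w₂)) ∧
    (∀ w₁ w₂, H.Adj w₁ w₂ → ∃ v₁ ∈ φ w₁, ∃ v₂ ∈ φ w₂, G.Adj v₁ v₂)
/-- A graph class: a (property of) simple graphs over all finite vertex types.
Closure under isomorphism is subsumed by minor-closedness below, since isomorphic
graphs are minors of each other. -/
abbrev GraphClass : Type 1 := ∀ (V : Type) [Finite V], SimpleGraph V → Prop

/-- The class `C` is minor-closed. -/
def MinorClosed (C : GraphClass) : Prop :=
  ∀ (V W : Type) [Finite V] [Finite W] (G : SimpleGraph V) (H : SimpleGraph W),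
    H.IsMinorOf G → C V G → C W H

/-- The class `C` is proper: it does not contain all graphs. -/
def ProperClass (C : GraphClass) : Prop :=
  ∃ (V : Type) (_ : Finite V) (G : SimpleGraph V), ¬ C V G

/-- The class `C` is nonempty. -/
def NonemptyClass (C : GraphClass) : Prop :=
  ∃ (V : Type) (_ : Finite V) (G : SimpleGraph V), C V G
/-- `K` is the vertex set of a connected component of `G - S`. -/
def IsCompOf {V : Type} (G : SimpleGraph V) (S K : Set V) : Prop :=
  ∃ D : (G.induce Sᶜ).ConnectedComponent, K = Subtype.val '' D.supp
/-- Every connected component of `G - S` belongs to the class `C`. -/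
def CompsIn (C : GraphClass) {V : Type} [Finite V] (G : SimpleGraph V) (S : Set V) : Prop :=
  ∀ K : Set V, IsCompOf G S K → C ↥K (G.induce K)
/-- The torso of `G` on `X`: the induced graph `G[X]` together with a clique on the
neighbourhood of every connected component of `G - X`. -/
def torso {V : Type} (G : SimpleGraph V) (X : Set V) : SimpleGraph ↥X :=
  SimpleGraph.fromRel fun u v =>
    G.Adj ↑u ↑v ∨ ∃ K : Set V, IsCompOf G X K ∧ (∃ w ∈ K, G.Adj ↑u w) ∧ ∃ w ∈ K, G.Adj ↑v w
/-- `(Tg, β)` is a tree decomposition of `G`. -/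
def IsTreeDecomp {V T : Type} (G : SimpleGraph V) (Tg : SimpleGraph T) (β : T → Set V) : Prop :=
  Tg.IsTree ∧ (∀ v : V, ∃ t, v ∈ β t) ∧
    (∀ u v : V, G.Adj u v → ∃ t, u ∈ β t ∧ v ∈ β t) ∧
    ∀ v : V, (Tg.induce {t | v ∈ β t}).Connected

/-- `G` has a tree decomposition of width at most `k` (all bags of size at most `k + 1`). -/
def HasTWLE {V : Type} (G : SimpleGraph V) (k : ℕ) : Prop :=
  ∃ (T : Type) (_ : Finite T) (Tg : SimpleGraph T) (β : T → Set V),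
    IsTreeDecomp G Tg β ∧ ∀ t, (β t).ncard ≤ k + 1
/-- `C`-treewidth: the least `k` such that for some `X ⊆ V(G)`, every connected component of
`G - X` belongs to `C` and the torso of `G` on `X` has treewidth at most `k`. -/
noncomputable def Htw (C : GraphClass) {V : Type} [Finite V] (G : SimpleGraph V) : ℕ :=
  sInf {k | ∃ X : Set V, CompsIn C G X ∧ HasTWLE (torso G X) k}
/-- A leaf of a tree: a node with at most one neighbour (the single node of a one-node tree
also counts as a leaf). -/
def TreeLeaf {T : Type} (Tg : SimpleGraph T) (d : T) : Prop :=
  (Tg.neighborSet d).Subsingleton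

/-- The adhesion of a leaf `d`: `β d ∩ β d'` for its unique neighbour `d'`
(empty if `d` has no neighbour). -/
def adhesion {V T : Type} (Tg : SimpleGraph T) (β : T → Set V) (d : T) : Set V :=
  ⋃ d' ∈ Tg.neighborSet d, β d ∩ β d'

/-- A `C`-tree decomposition: a tree decomposition in which, for every leaf `d`,
`G[β d ∖ A_d]` belongs to `C`. -/
def IsHTreeDecomp (C : GraphClass) {V T : Type} [Finite V] (G : SimpleGraph V)
    (Tg : SimpleGraph T) (β : T → Set V) : Prop :=
  IsTreeDecomp G Tg β ∧
    ∀ d : T, TreeLeaf Tg d →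
      C ↥(β d \ adhesion Tg β d) (G.induce (β d \ adhesion Tg β d))

/-- Width of a `C`-tree decomposition:
`max({0} ∪ {|β t| - 1 : t non-leaf} ∪ {|A_d| - 1 : d leaf})`. -/
noncomputable def HTDwidth {V T : Type} (Tg : SimpleGraph T) (β : T → Set V) : ℕ :=
  sSup (insert 0
    ({n | ∃ t, ¬ TreeLeaf Tg t ∧ n = (β t).ncard - 1} ∪
     {n | ∃ d, TreeLeaf Tg d ∧ n = (adhesion Tg β d).ncard - 1}))
/-! ### Auxiliary lemmas -/

section WalkAux
variable {T : Type} {Tg : SimpleGraph T}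

lemma reachable_induce_of_walk {S : Set T} :
    ∀ {x y : T} (w : Tg.Walk x y), (∀ z ∈ w.support, z ∈ S) →
      ∀ (hx : x ∈ S) (hy : y ∈ S), (Tg.induce S).Reachable ⟨x, hx⟩ ⟨y, hy⟩ := by
  intro x y w
  induction w with
  | nil => intro _ hx hy; rfl
  | @cons a b c h p ih =>
    intro hw hx hy
    have hb : b ∈ S := hw _ (by simp [SimpleGraph.Walk.support_cons])
    have : (Tg.induce S).Adj ⟨a, hx⟩ ⟨b, hb⟩ := h
    exact (this.reachable).trans
      (ih (fun z hz => hw z (by simp [SimpleGraph.Walk.support_cons, hz])) hb hy)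

lemma exists_path_in_of_connected {A : Set T} (hA : (Tg.induce A).Connected)
    {x y : T} (hx : x ∈ A) (hy : y ∈ A) :
    ∃ p : Tg.Walk x y, p.IsPath ∧ ∀ z ∈ p.support, z ∈ A := by
  classical
  obtain ⟨w⟩ := hA.preconnected ⟨x, hx⟩ ⟨y, hy⟩
  let w' := w.map (SimpleGraph.Embedding.induce A).toHom
  have hsupp : ∀ z ∈ w'.support, z ∈ A := by
    intro z hz
    rw [Walk.support_map, List.mem_map] at hz
    obtain ⟨⟨z', hz'⟩, _, rfl⟩ := hz
    exact hz'
  exact ⟨w'.bypass, w'.bypass_isPath, fun z hz => hsupp z (w'.support_bypass_subset hz)⟩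

lemma exists_first_point {S : Set T} :
    ∀ {b a : T} (w : Tg.Walk b a), a ∈ S →
      ∃ z ∈ S, ∃ q : Tg.Walk b z, (∀ y ∈ q.support, y ∈ w.support) ∧
        (∀ y ∈ q.support, y ∈ S → y = z) := by
  intro b a w
  induction w with
  | nil =>
    intro ha
    exact ⟨_, ha, Walk.nil, by simp, by simp⟩
  | @cons c d e h p ih =>
    intro ha
    by_cases hc : c ∈ S
    · exact ⟨c, hc, Walk.nil, by simp, by simp⟩
    · obtain ⟨z, hz, q, hq1, hq2⟩ := ih ha
      refine ⟨z, hz, Walk.cons h q, ?_, ?_⟩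
      · intro y hy
        rw [Walk.support_cons, List.mem_cons] at hy ⊢
        rcases hy with rfl | hy
        · exact Or.inl rfl
        · exact Or.inr (hq1 y hy)
      · intro y hy hyS
        rw [Walk.support_cons, List.mem_cons] at hy
        rcases hy with rfl | hy
        · exact absurd hyS hc
        · exact hq2 y hy hyS

lemma isPath_append {u v w : T} {p : Tg.Walk u v} {q : Tg.Walk v w}
    (hp : p.IsPath) (hq : q.IsPath)
    (h : ∀ x, x ∈ p.support → x ∈ q.support → x = v) : (p.append q).IsPath := by
  have hqsup : q.support = v :: q.support.tail := q.support_eq_cons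
  have hqnd : q.support.Nodup := hq.support_nodup
  have hvtail : v ∉ q.support.tail := by
    rw [hqsup] at hqnd; exact (List.nodup_cons.mp hqnd).1
  rw [Walk.isPath_def, Walk.support_append, List.nodup_append]
  refine ⟨hp.support_nodup, ?_, ?_⟩
  · rw [hqsup] at hqnd; exact (List.nodup_cons.mp hqnd).2
  · intro x hxp y hxq hxy
    rw [← hxy] at hxq
    have := h x hxp (by rw [hqsup]; exact List.mem_cons_of_mem _ hxq)
    subst this; exact hvtail hxq

lemma exists_median (hac : Tg.IsAcyclic) {a b c : T}
    (pab : Tg.Walk a b) (hab : pab.IsPath) (pac : Tg.Walk a c) (hpac : pac.IsPath)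
    (pbc : Tg.Walk b c) (hbc : pbc.IsPath) :
    ∃ z, z ∈ pab.support ∧ z ∈ pac.support ∧ z ∈ pbc.support := by
  classical
  obtain ⟨z, hz, q, hq1, hq2⟩ :=
    exists_first_point (S := {y | y ∈ pac.support}) pab.reverse (by simp)
  have hzab : z ∈ pab.support := by
    have := hq1 z q.end_mem_support
    rwa [Walk.support_reverse, List.mem_reverse] at this
  have hq1' : ∀ y ∈ q.support, y ∈ pab.support := by
    intro y hy
    have := hq1 y hy
    rwa [Walk.support_reverse, List.mem_reverse] at this
  set q' := q.bypass with hq'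
  have hq'path : q'.IsPath := q.bypass_isPath
  have hq'sub : ∀ y ∈ q'.support, y ∈ q.support := fun y hy => q.support_bypass_subset hy
  have hzac : z ∈ pac.support := hz
  let r := q'.append (pac.dropUntil z hzac)
  have hr : r.IsPath := by
    refine isPath_append hq'path (hpac.dropUntil hzac) ?_
    intro x hx1 hx2
    exact hq2 x (hq'sub x hx1) (pac.support_dropUntil_subset hzac hx2)
  have : pbc = r := by
    have := hac.path_unique ⟨pbc, hbc⟩ ⟨r, hr⟩
    exact congrArg Subtype.val this
  refine ⟨z, hzab, hzac, ?_⟩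
  rw [this]
  exact Walk.mem_support_append_iff _ _ |>.mpr (Or.inl q'.end_mem_support)

lemma inter_connected (hac : Tg.IsAcyclic) {A B : Set T}
    (hA : (Tg.induce A).Connected) (hB : (Tg.induce B).Connected)
    (hAB : (A ∩ B).Nonempty) : (Tg.induce (A ∩ B)).Connected := by
  rw [SimpleGraph.connected_iff]
  refine ⟨?_, hAB.to_subtype⟩
  rintro ⟨x, hxA, hxB⟩ ⟨y, hyA, hyB⟩
  obtain ⟨p, hp, hpA⟩ := exists_path_in_of_connected hA hxA hyA
  obtain ⟨q, hq, hqB⟩ := exists_path_in_of_connected hB hxB hyB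
  have : p = q := congrArg Subtype.val (hac.path_unique ⟨p, hp⟩ ⟨q, hq⟩)
  subst this
  exact reachable_induce_of_walk p (fun z hz => Set.mem_inter (hpA z hz) (hqB z hz)) _ _

lemma helly3 (hac : Tg.IsAcyclic) {A B C : Set T}
    (hA : (Tg.induce A).Connected) (hB : (Tg.induce B).Connected)
    (hC : (Tg.induce C).Connected)
    (hAB : (A ∩ B).Nonempty) (hAC : (A ∩ C).Nonempty) (hBC : (B ∩ C).Nonempty) :
    ∃ z, z ∈ A ∧ z ∈ B ∧ z ∈ C := by
  obtain ⟨a, haB, haC⟩ := hBC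
  obtain ⟨b, hbA, hbC⟩ := hAC
  obtain ⟨c, hcA, hcB⟩ := hAB
  obtain ⟨pab, hpab, habC⟩ := exists_path_in_of_connected hC haC hbC
  obtain ⟨pac, hpac, hacB⟩ := exists_path_in_of_connected hB haB hcB
  obtain ⟨pbc, hpbc, hbcA⟩ := exists_path_in_of_connected hA hbA hcA
  obtain ⟨z, h1, h2, h3⟩ := exists_median hac pab hpab pac hpac pbc hpbc
  exact ⟨z, hbcA z h3, hacB z h2, habC z h1⟩

lemma helly_finset (hT : Tg.IsTree) {ι : Type} (s : Finset ι) :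
    ∀ A : ι → Set T, (∀ i ∈ s, (Tg.induce (A i)).Connected) →
    (∀ i ∈ s, ∀ j ∈ s, (A i ∩ A j).Nonempty) →
    ∃ t, ∀ i ∈ s, t ∈ A i := by
  classical
  induction s using Finset.induction_on with
  | empty =>
    intro A _ _
    obtain ⟨t⟩ := hT.isConnected.nonempty
    exact ⟨t, by simp⟩
  | @insert i s hi ih =>
    intro A hconn hint
    rcases Finset.eq_empty_or_nonempty s with rfl | hs
    · obtain ⟨⟨t, ht⟩⟩ := (hconn i (by simp)).nonempty
      exact ⟨t, by simpa using ht⟩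
    · obtain ⟨z, hz⟩ := ih (fun j => A j ∩ A i)
        (fun j hj => inter_connected hT.IsAcyclic
          (hconn j (Finset.mem_insert_of_mem hj)) (hconn i (Finset.mem_insert_self i s))
          (hint j (Finset.mem_insert_of_mem hj) i (Finset.mem_insert_self i s)))
        (fun j hj k hk => by
          obtain ⟨z, h1, h2, h3⟩ := helly3 hT.IsAcyclic
            (hconn j (Finset.mem_insert_of_mem hj)) (hconn k (Finset.mem_insert_of_mem hk))
            (hconn i (Finset.mem_insert_self i s))
            (hint j (Finset.mem_insert_of_mem hj) k (Finset.mem_insert_of_mem hk))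
            (hint j (Finset.mem_insert_of_mem hj) i (Finset.mem_insert_self i s))
            (hint k (Finset.mem_insert_of_mem hk) i (Finset.mem_insert_self i s))
          exact ⟨z, ⟨h1, h3⟩, ⟨h2, h3⟩⟩)
      obtain ⟨j, hj⟩ := hs
      refine ⟨z, ?_⟩
      intro l hl
      rcases Finset.mem_insert.mp hl with rfl | hl
      · exact (hz j hj).2
      · exact (hz l hl).1

end WalkAux
section Pendant
variable {T I : Type} (Tg : SimpleGraph T) (f : I → T)

def pendant : SimpleGraph (T ⊕ I) :=
  SimpleGraph.fromRel (fun a b => match a, b with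
    | .inl a, .inl b => Tg.Adj a b
    | .inl t, .inr i => f i = t
    | _, _ => False)

variable {Tg f}

lemma pendant_adj_inl_inl {a b : T} : (pendant Tg f).Adj (.inl a) (.inl b) ↔ Tg.Adj a b := by
  simp only [pendant, fromRel_adj]
  constructor
  · rintro ⟨hne, h | h⟩
    · exact h
    · exact h.symm
  · intro h
    exact ⟨by simp [h.ne], Or.inl h⟩

lemma pendant_adj_inr {i : I} {z : T ⊕ I} : (pendant Tg f).Adj (.inr i) z ↔ z = .inl (f i) := by
  simp only [pendant, fromRel_adj]
  constructor
  · rintro ⟨hne, h | h⟩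
    · cases z with
      | inl t => exact absurd h (by simp)  -- match inr inl = False
      | inr j => exact absurd h (by simp)
    · cases z with
      | inl t => simp_all
      | inr j => exact absurd h (by simp)
  · rintro rfl
    exact ⟨by simp, Or.inr rfl⟩

end Pendant

section Pendant2
variable {T I : Type} {Tg : SimpleGraph T} {f : I → T}

lemma pendant_adj_inr_iff' {i : I} {z : T ⊕ I} :
    (pendant Tg f).Adj z (.inr i) ↔ z = .inl (f i) := by
  rw [adj_comm]; exact pendant_adj_inr

/-- The embedding hom from `Tg` into the pendant graph. -/
def pendantHom (Tg : SimpleGraph T) (f : I → T) : Tg →g pendant Tg f where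
  toFun := Sum.inl
  map_rel' := fun h => pendant_adj_inl_inl.mpr h

@[simp] lemma pendantHom_apply (a : T) : pendantHom Tg f a = Sum.inl a := rfl

lemma pendant_lift_walk :
    ∀ {u v : T ⊕ I} (w : (pendant Tg f).Walk u v),
      (∀ z ∈ w.support, ∃ a, z = Sum.inl a) →
      ∀ {x y : T} (hu : u = Sum.inl x) (hv : v = Sum.inl y),
        ∃ w' : Tg.Walk x y, w'.map (pendantHom Tg f) = w.copy hu hv := by
  intro u v w
  induction w with
  | nil =>
    intro _ x y hu hv
    subst hu
    have : x = y := by injection hv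
    subst this
    have : hv = rfl := rfl
    exact ⟨Walk.nil, by simp⟩
  | @cons a b c h p ih =>
    intro hsupp x y hu hv
    subst hu hv
    obtain ⟨b', rfl⟩ : ∃ b', b = Sum.inl b' := by
      refine hsupp b ?_
      rw [Walk.support_cons]
      exact List.mem_cons_of_mem _ p.start_mem_support
    obtain ⟨p', hp'⟩ := ih (fun z hz => hsupp z (by rw [Walk.support_cons]; exact List.mem_cons_of_mem _ hz)) rfl rfl
    refine ⟨Walk.cons (pendant_adj_inl_inl.mp h) p', ?_⟩
    rw [Walk.map_cons, hp']
    simp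

lemma pendant_isTree (hT : Tg.IsTree) : (pendant Tg f).IsTree := by
  constructor
  · -- connected
    rw [SimpleGraph.connected_iff]
    constructor
    · intro u v
      have key : ∀ z : T ⊕ I, ∃ a : T, (pendant Tg f).Reachable z (Sum.inl a) := by
        intro z
        cases z with
        | inl a => exact ⟨a, Reachable.refl _⟩
        | inr i => exact ⟨f i, Adj.reachable (pendant_adj_inr.mpr rfl)⟩
      obtain ⟨a, ha⟩ := key u
      obtain ⟨b, hb⟩ := key v
      refine ha.trans (Reachable.trans ?_ hb.symm)
      obtain ⟨w⟩ := hT.isConnected.preconnected a b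
      exact ⟨w.map (pendantHom Tg f)⟩
    · obtain ⟨t⟩ := hT.isConnected.nonempty
      exact ⟨Sum.inl t⟩
  · -- acyclic
    classical
    intro v c hc
    -- no `inr` in the support of a cycle
    have hnoinr : ∀ i : I, Sum.inr i ∉ c.support := by
      intro i hi
      have hc' := hc.rotate hi
      set c' := c.rotate _ hi with hcdef
      clear_value c'
      clear hcdef
      cases c' with
      | nil => exact hc'.ne_nil rfl
      | @cons _ w _ h p =>
        obtain rfl : w = Sum.inl (f i) := pendant_adj_inr.mp h
        have h3 : 3 ≤ p.length + 1 := hc'.three_le_length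
        have hpnd : p.support.Nodup := by
          have := hc'.2
          rwa [Walk.support_cons, List.tail_cons] at this
        -- decompose p.reverse
        obtain ⟨w2, h2, q, hp⟩ := Walk.exists_eq_cons_of_ne (by simp) p.reverse
        obtain rfl : w2 = Sum.inl (f i) := pendant_adj_inr.mp h2
        have hsupp : p.support.reverse = Sum.inr i :: q.support := by
          rw [← Walk.support_reverse, hp, Walk.support_cons]
        have hq : q.support.Nodup := by
          have : p.support.reverse.Nodup := List.nodup_reverse.mpr hpnd
          rw [hsupp] at this
          exact (List.nodup_cons.mp this).2
        have : q = Walk.nil := (Walk.isPath_iff_eq_nil (p := q)).mp (Walk.IsPath.mk' hq)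
        subst this
        have : p.length = 1 := by
          have := congrArg Walk.length hp
          simpa using this
        omega
    have hall : ∀ z ∈ c.support, ∃ a, z = Sum.inl a := by
      intro z hz
      cases z with
      | inl a => exact ⟨a, rfl⟩
      | inr i => exact absurd hz (hnoinr i)
    obtain ⟨a, rfl⟩ : ∃ a, v = Sum.inl a := hall v c.start_mem_support
    obtain ⟨w', hw'⟩ := pendant_lift_walk c hall rfl rfl
    rw [Walk.copy_rfl_rfl] at hw'
    have : w'.IsCycle := by
      have hinj : Function.Injective (pendantHom Tg f) := fun _ _ => by simp
      rw [← Walk.map_isCycle_iff_of_injective hinj, hw']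
      exact hc
    exact hT.IsAcyclic w' this

end Pendant2

section aux
variable {V : Type} {G : SimpleGraph V}

lemma connected_induce_subsingleton (S : Set V) [Nonempty ↥S] (hS : S.Subsingleton)
    : (G.induce S).Connected := by
  rw [SimpleGraph.connected_iff]
  refine ⟨fun a b => ?_, inferInstance⟩
  have : a = b := Subtype.ext (hS a.2 b.2)
  rw [this]

lemma isMinorOf_induce_of_subset {K P : Set V} (h : K ⊆ P) :
    (G.induce K).IsMinorOf (G.induce P) := by
  refine ⟨fun w => {⟨w.1, h w.2⟩}, fun w => ⟨_, rfl⟩, ?_, ?_, ?_⟩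
  · intro w
    have : Nonempty ↥({⟨w.1, h w.2⟩} : Set ↥P) := ⟨⟨_, rfl⟩⟩
    exact connected_induce_subsingleton _ Set.subsingleton_singleton
  · intro w₁ w₂ hne
    simp only [Set.disjoint_singleton_left, Set.mem_singleton_iff]
    intro hEq
    exact hne (Subtype.ext (by simpa using hEq))
  · intro w₁ w₂ hadj
    exact ⟨_, rfl, _, rfl, hadj⟩

lemma isMinorOf_of_isEmpty {W : Type} [IsEmpty W] (H : SimpleGraph W) (G : SimpleGraph V) :
    H.IsMinorOf G :=
  ⟨isEmptyElim, isEmptyElim, isEmptyElim, fun w => isEmptyElim w, fun w => isEmptyElim w⟩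

lemma class_of_isEmpty {C : GraphClass} (hne : NonemptyClass C) (hmc : MinorClosed C)
    {W : Type} [Finite W] [IsEmpty W] (H : SimpleGraph W) : C W H := by
  obtain ⟨V₀, _, G₀, h₀⟩ := hne
  exact hmc V₀ W G₀ H (isMinorOf_of_isEmpty H G₀) h₀

lemma class_congr (C : GraphClass) {V : Type} [Finite V] (G : SimpleGraph V)
    {S S' : Set V} (h : S = S') : C ↥S (G.induce S) → C ↥S' (G.induce S') := by
  subst h; exact id

end aux
section PendantExtra
variable {T I : Type} {Tg : SimpleGraph T} {f : I → T}

lemma pendant_neighborSet_inr (i : I) :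
    (pendant Tg f).neighborSet (Sum.inr i) = {Sum.inl (f i)} := by
  ext z; exact pendant_adj_inr

lemma pendant_treeLeaf_inr (i : I) : TreeLeaf (pendant Tg f) (Sum.inr i) := by
  rw [TreeLeaf, pendant_neighborSet_inr]
  exact Set.subsingleton_singleton

lemma pendant_adhesion_inr {V : Type} (β' : T ⊕ I → Set V)
    (i : I) : adhesion (pendant Tg f) β' (Sum.inr i) = β' (Sum.inr i) ∩ β' (Sum.inl (f i)) := by
  rw [adhesion, pendant_neighborSet_inr]
  simp

lemma pendant_adj_inl_inr {t : T} {i : I} :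
    (pendant Tg f).Adj (Sum.inl t) (Sum.inr i) ↔ f i = t := by
  rw [adj_comm, pendant_adj_inr]
  constructor
  · intro h; injection h with h; exact h.symm
  · intro h; rw [h]

lemma pendant_induce_connected {S : Set T} {J : Set I}
    (hS : (Tg.induce S).Connected) (hJ : ∀ i ∈ J, f i ∈ S) :
    ((pendant Tg f).induce (Sum.inl '' S ∪ Sum.inr '' J)).Connected := by
  set S' : Set (T ⊕ I) := Sum.inl '' S ∪ Sum.inr '' J with hS'
  have hmemS : ∀ t ∈ S, Sum.inl t ∈ S' := fun t ht => Or.inl ⟨t, ht, rfl⟩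
  have hmemJ : ∀ i ∈ J, Sum.inr i ∈ S' := fun i hi => Or.inr ⟨i, hi, rfl⟩
  -- the hom between induced subgraphs
  let φ : Tg.induce S →g (pendant Tg f).induce S' :=
    { toFun := fun a => ⟨Sum.inl a.1, hmemS a.1 a.2⟩,
      map_rel' := fun {a b} h => (pendant_adj_inl_inl (Tg := Tg) (f := f)).mpr h }
  rw [SimpleGraph.connected_iff]
  constructor
  · -- preconnected
    have key : ∀ z : ↥S', ∃ (a : T) (ha : a ∈ S),
        ((pendant Tg f).induce S').Reachable z ⟨Sum.inl a, hmemS a ha⟩ := by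
      rintro ⟨z, hz⟩
      cases z with
      | inl a =>
        have ha : a ∈ S := by
          rcases hz with ⟨a', ha', h⟩ | ⟨i, hi, h⟩
          · injection h with h; rwa [← h]
          · exact absurd h (by simp)
        exact ⟨a, ha, by
          have : (⟨Sum.inl a, hz⟩ : ↥S') = ⟨Sum.inl a, hmemS a ha⟩ := rfl
          rw [this]⟩
      | inr i =>
        have hi : i ∈ J := by
          rcases hz with ⟨a', ha', h⟩ | ⟨i', hi', h⟩
          · exact absurd h (by simp)
          · injection h with h; rwa [← h]
        refine ⟨f i, hJ i hi, ?_⟩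
        have hadj : ((pendant Tg f).induce S').Adj ⟨Sum.inr i, hz⟩
            ⟨Sum.inl (f i), hmemS _ (hJ i hi)⟩ := (pendant_adj_inr (Tg := Tg) (f := f)).mpr rfl
        exact hadj.reachable
    intro x y
    obtain ⟨a, ha, hxa⟩ := key x
    obtain ⟨b, hb, hyb⟩ := key y
    refine hxa.trans (Reachable.trans ?_ hyb.symm)
    obtain ⟨w⟩ := hS.preconnected ⟨a, ha⟩ ⟨b, hb⟩
    exact ⟨(w.map φ).copy rfl rfl⟩
  · obtain ⟨⟨t, ht⟩⟩ := hS.nonempty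
    exact ⟨⟨Sum.inl t, hmemS t ht⟩⟩

end PendantExtra
section DirA
variable {V T : Type} [Finite V] {G : SimpleGraph V} {Tg : SimpleGraph T} {β : T → Set V}

/-- If a vertex's bag-set contains `d` and a different node, it meets the adhesion at `d`. -/
lemma mem_adhesion_of_mem_two_bags (htd : IsTreeDecomp G Tg β) {d t : T} (hne : t ≠ d)
    {v : V} (hvd : v ∈ β d) (hvt : v ∈ β t) : v ∈ adhesion Tg β d := by
  have hconn := htd.2.2.2 v
  obtain ⟨w⟩ := hconn.preconnected ⟨d, hvd⟩ ⟨t, hvt⟩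
  have hdt : (⟨d, hvd⟩ : {t | v ∈ β t}) ≠ ⟨t, hvt⟩ := fun h => hne (congrArg Subtype.val h).symm
  obtain ⟨s, hadj, q, -⟩ := Walk.exists_eq_cons_of_ne hdt w
  have hAdj : Tg.Adj d ↑s := hadj
  rw [adhesion]
  exact Set.mem_biUnion hAdj ⟨hvd, s.2⟩

lemma dirA (C : GraphClass) (hmc : MinorClosed C) (G : SimpleGraph V) [Finite T]
    (Tg : SimpleGraph T) (β : T → Set V) (hd : IsHTreeDecomp C G Tg β) :
    ∃ X : Set V, CompsIn C G X ∧ HasTWLE (torso G X) (HTDwidth Tg β) := by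
  classical
  obtain ⟨htd, hleafC⟩ := hd
  set w := HTDwidth Tg β with hwdef
  set P : T → Set V := fun d => β d \ adhesion Tg β d with hP
  set X : Set V := {v | ∀ d, TreeLeaf Tg d → v ∉ P d} with hX
  -- width bounds
  have hbdd : BddAbove (insert 0
      ({n | ∃ t, ¬ TreeLeaf Tg t ∧ n = (β t).ncard - 1} ∪
       {n | ∃ d, TreeLeaf Tg d ∧ n = (adhesion Tg β d).ncard - 1})) := by
    refine ⟨(Set.univ : Set V).ncard, ?_⟩
    rintro n (rfl | (⟨t, -, rfl⟩ | ⟨d, -, rfl⟩))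
    · exact Nat.zero_le _
    · exact le_trans (Nat.sub_le _ _)
        (Set.ncard_le_ncard (Set.subset_univ _) Set.finite_univ)
    · exact le_trans (Nat.sub_le _ _)
        (Set.ncard_le_ncard (Set.subset_univ _) Set.finite_univ)
  have hnonleaf : ∀ t, ¬ TreeLeaf Tg t → (β t).ncard ≤ w + 1 := by
    intro t ht
    have : (β t).ncard - 1 ≤ w :=
      le_csSup hbdd (Set.mem_insert_iff.mpr (Or.inr (Or.inl ⟨t, ht, rfl⟩)))
    omega
  have hleafadh : ∀ d, TreeLeaf Tg d → (adhesion Tg β d).ncard ≤ w + 1 := by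
    intro d hdl
    have : (adhesion Tg β d).ncard - 1 ≤ w :=
      le_csSup hbdd (Set.mem_insert_iff.mpr (Or.inr (Or.inr ⟨d, hdl, rfl⟩)))
    omega
  -- adjacent vertices in parts are in the same part
  have hsame : ∀ (a b : V) (d e : T), G.Adj a b → a ∈ P d → b ∈ P e → d = e := by
    intro a b d e hab ha hb
    by_contra hde
    obtain ⟨t, hat, hbt⟩ := htd.2.2.1 a b hab
    by_cases htd' : t = d
    · have hte : t ≠ e := by rw [htd']; exact hde
      exact hb.2 (mem_adhesion_of_mem_two_bags htd hte hb.1 hbt)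
    · exact ha.2 (mem_adhesion_of_mem_two_bags htd htd' ha.1 hat)
  -- every vertex outside X is in a part of a leaf
  have hcompl : ∀ v : V, v ∉ X → ∃ d, TreeLeaf Tg d ∧ v ∈ P d := by
    intro v hv
    rw [hX, Set.mem_setOf_eq] at hv
    push_neg at hv
    obtain ⟨d, hd1, hd2⟩ := hv
    exact ⟨d, hd1, hd2⟩
  -- components are contained in single parts
  have hcompsub : ∀ D : (G.induce Xᶜ).ConnectedComponent,
      ∃ d, TreeLeaf Tg d ∧ Subtype.val '' D.supp ⊆ P d := by
    intro D
    obtain ⟨v0, rfl⟩ := D.exists_rep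
    obtain ⟨d0, hld0, hv0⟩ := hcompl ↑v0 v0.2
    refine ⟨d0, hld0, ?_⟩
    have hwalkpart : ∀ {a b : ↥(Xᶜ)} (p : (G.induce Xᶜ).Walk a b),
        ↑a ∈ P d0 → ↑b ∈ P d0 := by
      intro a b p
      induction p with
      | nil => exact id
      | @cons a c _ hadj q ih =>
        intro ha
        have hac : G.Adj ↑a ↑c := hadj
        obtain ⟨e, hle, hc⟩ := hcompl ↑c c.2
        have : d0 = e := hsame ↑a ↑c d0 e hac ha hc
        exact ih (this ▸ hc)
    rintro _ ⟨y, hy, rfl⟩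
    change (G.induce Xᶜ).connectedComponentMk y = (G.induce Xᶜ).connectedComponentMk v0 at hy
    obtain ⟨p⟩ := (ConnectedComponent.exact hy).symm
    exact hwalkpart p hv0
  refine ⟨X, ?_, ?_⟩
  · -- CompsIn
    rintro K ⟨D, rfl⟩
    obtain ⟨d0, hld0, hsub⟩ := hcompsub D
    exact hmc _ _ _ _ (isMinorOf_induce_of_subset hsub) (hleafC d0 hld0)
  · -- HasTWLE of the torso
    set γ : T → Set ↥X := fun t => {x : ↥X | ↑x ∈ β t} with hγ
    refine ⟨T, inferInstance, Tg, γ, ⟨htd.1, ?_, ?_, ?_⟩, ?_⟩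
    · -- cover
      intro x
      obtain ⟨t, ht⟩ := htd.2.1 ↑x
      exact ⟨t, ht⟩
    · -- edges
      have key : ∀ x y : ↥X,
          (G.Adj ↑x ↑y ∨ ∃ K : Set V, IsCompOf G X K ∧
            (∃ w ∈ K, G.Adj ↑x w) ∧ ∃ w ∈ K, G.Adj ↑y w) →
          ∃ t, x ∈ γ t ∧ y ∈ γ t := by
        rintro x y (hxy | ⟨K, ⟨D, rfl⟩, ⟨w1, hw1, ha1⟩, ⟨w2, hw2, ha2⟩⟩)
        · obtain ⟨t, ht1, ht2⟩ := htd.2.2.1 ↑x ↑y hxy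
          exact ⟨t, ht1, ht2⟩
        · obtain ⟨d0, hld0, hsub⟩ := hcompsub D
          have hw1P : w1 ∈ P d0 := hsub hw1
          have hw2P : w2 ∈ P d0 := hsub hw2
          have hx : ↑x ∈ β d0 := by
            obtain ⟨t, hxt, hwt⟩ := htd.2.2.1 ↑x w1 ha1
            by_cases h : t = d0
            · rwa [← h]
            · exact absurd (mem_adhesion_of_mem_two_bags htd h hw1P.1 hwt) hw1P.2
          have hy : ↑y ∈ β d0 := by
            obtain ⟨t, hyt, hwt⟩ := htd.2.2.1 ↑y w2 ha2
            by_cases h : t = d0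
            · rwa [← h]
            · exact absurd (mem_adhesion_of_mem_two_bags htd h hw2P.1 hwt) hw2P.2
          exact ⟨d0, hx, hy⟩
      intro x y hxy
      rw [torso, fromRel_adj] at hxy
      obtain ⟨-, h | h⟩ := hxy
      · exact key x y h
      · obtain ⟨t, h1, h2⟩ := key y x h
        exact ⟨t, h2, h1⟩
    · -- vertex subtrees
      intro x
      exact htd.2.2.2 ↑x
    · -- bag sizes
      intro t
      have himg : (γ t).ncard = (Subtype.val '' γ t).ncard :=
        (Set.ncard_image_of_injective _ Subtype.val_injective).symm
      by_cases hl : TreeLeaf Tg t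
      · have hsub : Subtype.val '' γ t ⊆ adhesion Tg β t := by
          rintro _ ⟨x, hx, rfl⟩
          have hnP : ↑x ∉ P t := x.2 t hl
          rw [hP] at hnP
          simp only [Set.mem_diff, not_and, not_not] at hnP
          exact hnP hx
        rw [himg]
        exact le_trans (Set.ncard_le_ncard hsub (Set.toFinite _)) (hleafadh t hl)
      · have hsub : Subtype.val '' γ t ⊆ β t := by
          rintro _ ⟨x, hx, rfl⟩; exact hx
        rw [himg]
        exact le_trans (Set.ncard_le_ncard hsub (Set.toFinite _)) (hnonleaf t hl)
end DirA
section DirB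

lemma adhesion_subset {V T : Type} (Tg : SimpleGraph T) (β : T → Set V) (d : T) :
    adhesion Tg β d ⊆ β d := by
  rw [adhesion]
  exact Set.iUnion₂_subset fun d' _ => Set.inter_subset_left

lemma dirB (C : GraphClass) (hne : NonemptyClass C) (hmc : MinorClosed C)
    {V : Type} [Finite V] (G : SimpleGraph V) (X : Set V) (k : ℕ)
    (hcomp : CompsIn C G X) (hkX : HasTWLE (torso G X) k) :
    ∃ w ≤ k, ∃ (T' : Type) (_ : Finite T') (Tg' : SimpleGraph T') (β' : T' → Set V),
      IsHTreeDecomp C G Tg' β' ∧ HTDwidth Tg' β' = w := by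
  classical
  obtain ⟨T, finT, Tg, β, htd, hsize⟩ := hkX
  set KD : (G.induce Xᶜ).ConnectedComponent → Set V :=
    (fun D => Subtype.val '' D.supp) with hKD
  set ND : (G.induce Xᶜ).ConnectedComponent → Set ↥X :=
    (fun D => {x | ∃ w ∈ KD D, G.Adj ↑x w}) with hND
  have hKDsub : ∀ D, KD D ⊆ Xᶜ := by rintro D _ ⟨y, -, rfl⟩; exact y.2
  -- the neighbourhood of each component is a clique of the torso, hence inside a bag
  have hbag : ∀ D, ∃ t, ∀ x ∈ ND D, x ∈ β t := by
    intro D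
    obtain ⟨t, ht⟩ := helly_finset htd.1 (Set.toFinite (ND D)).toFinset
      (fun x => {t | x ∈ β t})
      (fun x _ => htd.2.2.2 x)
      (by
        intro x hx y hy
        rw [Set.Finite.mem_toFinset] at hx hy
        by_cases hxy : x = y
        · subst hxy
          obtain ⟨t, ht⟩ := htd.2.1 x
          exact ⟨t, ht, ht⟩
        · have hadj : (torso G X).Adj x y := by
            rw [torso, fromRel_adj]
            obtain ⟨w1, hw1, ha1⟩ := hx
            obtain ⟨w2, hw2, ha2⟩ := hy
            exact ⟨hxy, Or.inl (Or.inr ⟨KD D, ⟨D, rfl⟩, ⟨w1, hw1, ha1⟩, ⟨w2, hw2, ha2⟩⟩)⟩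
          obtain ⟨t, h1, h2⟩ := htd.2.2.1 x y hadj
          exact ⟨t, h1, h2⟩)
    exact ⟨t, fun x hx => ht x ((Set.Finite.mem_toFinset _).mpr hx)⟩
  choose t0 ht0 using hbag
  haveI : Finite ((G.induce Xᶜ).ConnectedComponent) :=
    Finite.of_surjective (SimpleGraph.connectedComponentMk _)
      (fun D => D.exists_rep)
  set f : T ⊕ ((G.induce Xᶜ).ConnectedComponent) → T := Sum.elim id t0 with hf
  set β' : T ⊕ (T ⊕ ((G.induce Xᶜ).ConnectedComponent)) → Set V :=
    Sum.elim (fun t => Subtype.val '' (β t))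
      (Sum.elim (fun t => Subtype.val '' (β t))
        (fun D => KD D ∪ Subtype.val '' (ND D))) with hβ'
  have hmem1 : ∀ (t : T) (v : V) (hv : v ∈ X),
      (v ∈ Subtype.val '' (β t) ↔ ⟨v, hv⟩ ∈ β t) := by
    intro t v hv
    constructor
    · rintro ⟨x, hx, h⟩
      obtain rfl : x = ⟨v, hv⟩ := Subtype.ext h
      exact hx
    · intro h
      exact ⟨⟨v, hv⟩, h, rfl⟩
  have hXsub : ∀ t, Subtype.val '' (β t : Set ↥X) ⊆ X := by
    rintro t _ ⟨x, -, rfl⟩; exact x.2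
  have hNDsub : ∀ D, Subtype.val '' (ND D) ⊆ Subtype.val '' (β (t0 D)) :=
    fun D => Set.image_mono (ht0 D)
  have hKDmem : ∀ (v : V) (hv : v ∈ Xᶜ) (D), v ∈ KD D ↔
      (G.induce Xᶜ).connectedComponentMk ⟨v, hv⟩ = D := by
    intro v hv D
    rw [hKD]
    constructor
    · rintro ⟨y, hy, rfl⟩
      have : y = ⟨↑y, hv⟩ := Subtype.ext rfl
      rw [ConnectedComponent.mem_supp_iff] at hy
      rwa [← this]
    · intro h
      exact ⟨⟨v, hv⟩, ConnectedComponent.mem_supp_iff _ _ |>.mpr h, rfl⟩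
  -- key adhesion computations for the pendant graph
  have hadh_inl : ∀ t : T, β' (Sum.inl t) ⊆
      adhesion (pendant Tg f) β' (Sum.inl t) := by
    intro t v hv
    have hadj : (pendant Tg f).Adj (Sum.inl t) (Sum.inr (Sum.inl t)) :=
      pendant_adj_inl_inr.mpr rfl
    exact Set.mem_biUnion hadj ⟨hv, hv⟩
  have hadh_inr_inl : ∀ t : T, β' (Sum.inr (Sum.inl t)) ⊆
      adhesion (pendant Tg f) β' (Sum.inr (Sum.inl t)) := by
    intro t v hv
    have hadj : (pendant Tg f).Adj (Sum.inr (Sum.inl t)) (Sum.inl t) :=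
      pendant_adj_inr.mpr rfl
    exact Set.mem_biUnion hadj ⟨hv, hv⟩
  have hpart_comp : ∀ D, β' (Sum.inr (Sum.inr D)) \
      adhesion (pendant Tg f) β' (Sum.inr (Sum.inr D)) = KD D := by
    intro D
    have hadh : adhesion (pendant Tg f) β' (Sum.inr (Sum.inr D)) =
        β' (Sum.inr (Sum.inr D)) ∩ β' (Sum.inl (t0 D)) :=
      pendant_adhesion_inr β' (Sum.inr D)
    rw [hadh]
    ext v
    constructor
    · rintro ⟨hv1, hv2⟩
      rcases hv1 with hv1 | hv1
      · exact hv1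
      · exact absurd ⟨Or.inr hv1, hNDsub D hv1⟩ hv2
    · intro hv
      refine ⟨Or.inl hv, ?_⟩
      rintro ⟨-, hv2⟩
      exact (hKDsub D hv) (hXsub _ hv2)
  refine ⟨HTDwidth (pendant Tg f) β', ?_, T ⊕ (T ⊕ ((G.induce Xᶜ).ConnectedComponent)),
    inferInstance, pendant Tg f, β', ⟨⟨pendant_isTree htd.1, ?_, ?_, ?_⟩, ?_⟩, rfl⟩
  · -- width bound
    refine csSup_le ⟨0, Set.mem_insert _ _⟩ ?_
    have hncard : ∀ t : T, (Subtype.val '' (β t : Set ↥X)).ncard ≤ k + 1 := by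
      intro t
      rw [Set.ncard_image_of_injective _ Subtype.val_injective]
      exact hsize t
    rintro n (rfl | (⟨t', hnl, rfl⟩ | ⟨d, hdl, rfl⟩))
    · exact Nat.zero_le _
    · cases t' with
      | inl t =>
        have := hncard t
        have h2 : (β' (Sum.inl t)).ncard ≤ k + 1 := this
        omega
      | inr i => exact absurd (pendant_treeLeaf_inr i) hnl
    · have hle : (adhesion (pendant Tg f) β' d).ncard ≤ k + 1 := by
        cases d with
        | inl t =>
          refine le_trans (Set.ncard_le_ncard ?_ (Set.toFinite _)) (hncard t)
          exact adhesion_subset _ _ _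
        | inr i =>
          rw [pendant_adhesion_inr]
          refine le_trans (Set.ncard_le_ncard Set.inter_subset_right (Set.toFinite _)) ?_
          cases i with
          | inl t => exact hncard t
          | inr D => exact hncard (t0 D)
      omega
  · -- cover
    intro v
    by_cases hv : v ∈ X
    · obtain ⟨t, ht⟩ := htd.2.1 ⟨v, hv⟩
      exact ⟨Sum.inl t, ⟨⟨v, hv⟩, ht, rfl⟩⟩
    · refine ⟨Sum.inr (Sum.inr ((G.induce Xᶜ).connectedComponentMk ⟨v, hv⟩)), Or.inl ?_⟩
      exact (hKDmem v hv _).mpr rfl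
  · -- edges
    intro u v huv
    by_cases hu : u ∈ X <;> by_cases hv : v ∈ X
    · have hadj : (torso G X).Adj ⟨u, hu⟩ ⟨v, hv⟩ := by
        rw [torso, fromRel_adj]
        exact ⟨fun h => huv.ne (congrArg Subtype.val h), Or.inl (Or.inl huv)⟩
      obtain ⟨t, h1, h2⟩ := htd.2.2.1 _ _ hadj
      exact ⟨Sum.inl t, ⟨_, h1, rfl⟩, ⟨_, h2, rfl⟩⟩
    · set D := (G.induce Xᶜ).connectedComponentMk ⟨v, hv⟩ with hD
      refine ⟨Sum.inr (Sum.inr D), Or.inr ⟨⟨u, hu⟩, ⟨v, (hKDmem v hv D).mpr rfl, huv⟩, rfl⟩,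
        Or.inl ((hKDmem v hv D).mpr rfl)⟩
    · set D := (G.induce Xᶜ).connectedComponentMk ⟨u, hu⟩ with hD
      refine ⟨Sum.inr (Sum.inr D), Or.inl ((hKDmem u hu D).mpr rfl),
        Or.inr ⟨⟨v, hv⟩, ⟨u, (hKDmem u hu D).mpr rfl, huv.symm⟩, rfl⟩⟩
    · have hadj : (G.induce Xᶜ).Adj ⟨u, hu⟩ ⟨v, hv⟩ := huv
      set D := (G.induce Xᶜ).connectedComponentMk ⟨u, hu⟩ with hD
      have hvD : (G.induce Xᶜ).connectedComponentMk ⟨v, hv⟩ = D :=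
        ConnectedComponent.sound hadj.symm.reachable
      exact ⟨Sum.inr (Sum.inr D), Or.inl ((hKDmem u hu D).mpr rfl),
        Or.inl ((hKDmem v hv D).mpr hvD)⟩
  · -- vertex subtrees are connected
    intro v
    by_cases hv : v ∈ X
    · -- rewrite the set as an image union
      have hset : {z | v ∈ β' z} =
          Sum.inl '' {t | ⟨v, hv⟩ ∈ β t} ∪
          Sum.inr '' {i | ⟨v, hv⟩ ∈ Sum.elim β ND i} := by
        ext z
        cases z with
        | inl t =>
          simp only [Set.mem_setOf_eq, Set.mem_union, Set.mem_image]
          constructor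
          · intro h
            exact Or.inl ⟨t, (hmem1 t v hv).mp h, rfl⟩
          · rintro (⟨t', ht', h⟩ | ⟨i, hi, h⟩)
            · injection h with h; subst h; exact (hmem1 _ v hv).mpr ht'
            · exact absurd h (by simp)
        | inr i =>
          simp only [Set.mem_setOf_eq, Set.mem_union, Set.mem_image]
          constructor
          · intro h
            refine Or.inr ⟨i, ?_, rfl⟩
            cases i with
            | inl t => exact (hmem1 t v hv).mp h
            | inr D =>
              rcases h with h | h
              · exact absurd hv (hKDsub D h)
              · obtain ⟨x, hx, hxv⟩ := h
                obtain rfl : x = ⟨v, hv⟩ := Subtype.ext hxv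
                exact hx
          · rintro (⟨t', ht', h⟩ | ⟨i', hi', h⟩)
            · exact absurd h (by simp)
            · injection h with h
              subst h
              cases i' with
              | inl t => exact (hmem1 _ v hv).mpr hi'
              | inr D => exact Or.inr ⟨⟨v, hv⟩, hi', rfl⟩
      rw [hset]
      refine pendant_induce_connected (htd.2.2.2 ⟨v, hv⟩) ?_
      intro i hi
      cases i with
      | inl t => exact hi
      | inr D => exact ht0 D _ hi
    · -- the set is a singleton
      have hset : {z | v ∈ β' z} =
          {Sum.inr (Sum.inr ((G.induce Xᶜ).connectedComponentMk ⟨v, hv⟩))} := by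
        ext z
        simp only [Set.mem_setOf_eq, Set.mem_singleton_iff]
        cases z with
        | inl t =>
          constructor
          · intro h; exact absurd (hXsub t h) hv
          · intro h; exact absurd h (by simp)
        | inr i =>
          cases i with
          | inl t =>
            constructor
            · intro h; exact absurd (hXsub t h) hv
            · intro h; exact absurd h (by simp)
          | inr D =>
            constructor
            · intro h
              rcases h with h | h
              · rw [hKDmem v hv D] at h
                rw [← h]
              · obtain ⟨x, -, rfl⟩ := h
                exact absurd x.2 hv
            · intro h
              injection h with h
              injection h with h
              subst h
              exact Or.inl ((hKDmem v hv _).mpr rfl)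
      rw [hset]
      haveI : Nonempty ↥({Sum.inr (Sum.inr ((G.induce Xᶜ).connectedComponentMk ⟨v, hv⟩))} :
          Set (T ⊕ (T ⊕ (G.induce Xᶜ).ConnectedComponent))) := ⟨⟨_, rfl⟩⟩
      exact connected_induce_subsingleton _ Set.subsingleton_singleton
  · -- leaf parts belong to C
    intro d hdl
    cases d with
    | inl t =>
      have hpart : β' (Sum.inl t) \ adhesion (pendant Tg f) β' (Sum.inl t) = ∅ :=
        Set.diff_eq_empty.mpr (hadh_inl t)
      exact class_congr C G hpart.symm (class_of_isEmpty hne hmc _)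
    | inr i =>
      cases i with
      | inl t =>
        have hpart :
            β' (Sum.inr (Sum.inl t)) \ adhesion (pendant Tg f) β' (Sum.inr (Sum.inl t)) = ∅ :=
          Set.diff_eq_empty.mpr (hadh_inr_inl t)
        exact class_congr C G hpart.symm (class_of_isEmpty hne hmc _)
      | inr D =>
        exact class_congr C G (hpart_comp D).symm (hcomp _ ⟨D, rfl⟩)
end DirB
section Main

lemma S1_nonempty (C : GraphClass) {V : Type} [Finite V] (G : SimpleGraph V) :
    ∃ k, ∃ X : Set V, CompsIn C G X ∧ HasTWLE (torso G X) k := by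
  classical
  haveI : IsEmpty ↥((Set.univ : Set V)ᶜ) := ⟨fun x => x.2 (Set.mem_univ x.1)⟩
  refine ⟨(Set.univ : Set ↥(Set.univ : Set V)).ncard, Set.univ, ?_, ?_⟩
  · rintro K ⟨D, -⟩
    obtain ⟨x, -⟩ := D.exists_rep
    exact isEmptyElim x
  · refine ⟨PUnit, inferInstance, ⊥, fun _ => Set.univ, ⟨⟨?_, isAcyclic_bot⟩, ?_, ?_, ?_⟩, ?_⟩
    · rw [SimpleGraph.connected_iff]
      exact ⟨fun a b => by rw [Subsingleton.elim a b], ⟨PUnit.unit⟩⟩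
    · exact fun v => ⟨PUnit.unit, trivial⟩
    · exact fun u v _ => ⟨PUnit.unit, trivial, trivial⟩
    · intro v
      haveI : Nonempty ↥{t : PUnit | v ∈ (Set.univ : Set ↥(Set.univ : Set V))} :=
        ⟨⟨PUnit.unit, trivial⟩⟩
      exact connected_induce_subsingleton _ (fun a _ b _ => Subsingleton.elim a b)
    · intro t
      exact Nat.le_succ _

end Main

/-- **Lemma 11.1.** Let `C` be a nonempty proper minor-closed graph class. For every
graph `G`, the `C`-treewidth of `G` equals the minimum width of a `C`-tree decomposition
of `G`. -/
theorem Htw_eq_min_HTreeDecomp_width (C : GraphClass)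
    (hne : NonemptyClass C) (hmc : MinorClosed C) (hproper : ProperClass C)
    {V : Type} [Finite V] (G : SimpleGraph V) :
    Htw C G =
      sInf {w | ∃ (T : Type) (_ : Finite T) (Tg : SimpleGraph T) (β : T → Set V),
        IsHTreeDecomp C G Tg β ∧ HTDwidth Tg β = w} := by
  classical
  have h1 : {k : ℕ | ∃ X : Set V, CompsIn C G X ∧ HasTWLE (torso G X) k}.Nonempty := by
    obtain ⟨k, hk⟩ := S1_nonempty C G
    exact ⟨k, hk⟩
  have hk0 : Htw C G ∈ {k : ℕ | ∃ X : Set V, CompsIn C G X ∧ HasTWLE (torso G X) k} :=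
    Nat.sInf_mem h1
  obtain ⟨X, hX1, hX2⟩ := hk0
  obtain ⟨w, hwk, hw2⟩ := dirB C hne hmc G X (Htw C G) hX1 hX2
  have hsub : {w | ∃ (T : Type) (_ : Finite T) (Tg : SimpleGraph T) (β : T → Set V),
      IsHTreeDecomp C G Tg β ∧ HTDwidth Tg β = w} ⊆
      {k : ℕ | ∃ X : Set V, CompsIn C G X ∧ HasTWLE (torso G X) k} := by
    rintro w' ⟨T, finT, Tg, β, hdecomp, rfl⟩
    exact dirA C hmc G Tg β hdecomp
  apply le_antisymm
  · have hS2ne : {w | ∃ (T : Type) (_ : Finite T) (Tg : SimpleGraph T) (β : T → Set V),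
        IsHTreeDecomp C G Tg β ∧ HTDwidth Tg β = w}.Nonempty := ⟨w, hw2⟩
    exact Nat.sInf_le (hsub (Nat.sInf_mem hS2ne))
  · exact le_trans (Nat.sInf_le hw2) hwk
end

section
/- Let H be a nonempty proper minor-closed graph class. For every graph G, H-sbn(G) ≤ H-tw(G) + 1; equivalently, every strict H-bramble in G admits a hitting set of size at most H-tw(G) + 1. (Lemma 11.3) -/
open SimpleGraph

set_option autoImplicit false

/-- A strict `C`-bramble in `G`: a collection of connected subgraphs of `G`, any two of
which share a vertex, none of which belongs to `C`. -/
def IsStrictBramble (C : GraphClass) {V : Type} [Finite V] (G : SimpleGraph V)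
    (B : Set G.Subgraph) : Prop :=
  (∀ b ∈ B, b.Connected) ∧
  (∀ b₁ ∈ B, ∀ b₂ ∈ B, (b₁.verts ∩ b₂.verts).Nonempty) ∧
  ∀ b ∈ B, ¬ C ↥(b.verts) b.coe
section Helpers

variable {V : Type}

lemma walk_to_induce {G : SimpleGraph V} {S : Set V} {u v : V} (p : G.Walk u v)
    (hp : ∀ z ∈ p.support, z ∈ S) (hu : u ∈ S) (hv : v ∈ S) :
    (G.induce S).Reachable ⟨u, hu⟩ ⟨v, hv⟩ := by
  induction p with
  | nil => rfl
  | @cons a b c h q ih =>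
    have hb : b ∈ S := hp b (by simp)
    have h1 : (G.induce S).Adj ⟨a, hu⟩ ⟨b, hb⟩ := h
    exact h1.reachable.trans (ih (fun z hz => hp z (by simp [hz])) hb hv)

lemma induce_to_walk {G : SimpleGraph V} {S : Set V} (x y : ↥S)
    (h : (G.induce S).Reachable x y) :
    ∃ w : G.Walk ↑x ↑y, ∀ z ∈ w.support, z ∈ S := by
  obtain ⟨q⟩ := h
  refine ⟨q.map ⟨Subtype.val, fun h => h⟩, ?_⟩
  intro z hz
  rw [Walk.support_map, List.mem_map] at hz
  obtain ⟨z', _, rfl⟩ := hz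
  exact z'.2

lemma subgraph_walk {G : SimpleGraph V} {b : G.Subgraph} (hb : b.Connected)
    {u v : V} (hu : u ∈ b.verts) (hv : v ∈ b.verts) :
    ∃ p : G.Walk u v, ∀ z ∈ p.support, z ∈ b.verts := by
  obtain ⟨q⟩ := hb.preconnected ⟨u, hu⟩ ⟨v, hv⟩
  refine ⟨q.map b.hom, ?_⟩
  intro z hz
  replace hz : z ∈ (q.map b.hom).support := hz
  rw [Walk.support_map, List.mem_map] at hz
  obtain ⟨z', _, rfl⟩ := hz
  exact z'.2

lemma connected_of_subsingleton {α : Type} [Nonempty α] [Subsingleton α]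
    (Gr : SimpleGraph α) : Gr.Connected :=
  ⟨fun u v => by rw [Subsingleton.elim u v]⟩

lemma torso_adj {G : SimpleGraph V} {X : Set V} {u v : ↥X} (hne : u ≠ v)
    (h : G.Adj ↑u ↑v ∨ ∃ K : Set V, IsCompOf G X K ∧ (∃ w ∈ K, G.Adj ↑u w) ∧
      ∃ w ∈ K, G.Adj ↑v w) :
    (torso G X).Adj u v := by
  rw [torso, fromRel_adj]
  exact ⟨hne, Or.inl h⟩

lemma torso_walk {G : SimpleGraph V} {X A : Set V} :
    ∀ {u v : V} (p : G.Walk u v) (hv : v ∈ X), (∀ z ∈ p.support, z ∈ A) →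
      ((∀ hu : u ∈ X, ∃ w : (torso G X).Walk ⟨u, hu⟩ ⟨v, hv⟩, ∀ z ∈ w.support, ↑z ∈ A) ∧
       (∀ hu : u ∉ X, ∃ x, ∃ hx : x ∈ X, x ∈ A ∧
          (∃ w', ∃ hw' : w' ∉ X, (G.induce Xᶜ).Reachable ⟨w', hw'⟩ ⟨u, hu⟩ ∧ G.Adj x w') ∧
          ∃ w : (torso G X).Walk ⟨x, hx⟩ ⟨v, hv⟩, ∀ z ∈ w.support, ↑z ∈ A)) := by
  intro u v p
  induction p with
  | nil =>
    intro hv hsupp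
    constructor
    · intro hu
      refine ⟨Walk.nil, ?_⟩
      intro z hz
      rw [Walk.support_nil, List.mem_singleton] at hz
      subst hz
      exact hsupp _ (by simp)
    · intro hu; exact absurd hv hu
  | @cons u u' w h q ih =>
    intro hv hsupp
    have hqA : ∀ z ∈ q.support, z ∈ A := fun z hz => hsupp z (by simp [hz])
    have huA : u ∈ A := hsupp u (by simp)
    by_cases hu' : u' ∈ X
    · obtain ⟨tw, htw⟩ := (ih hv hqA).1 hu'
      constructor
      · intro hu
        have hadj : (torso G X).Adj ⟨u, hu⟩ ⟨u', hu'⟩ :=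
          torso_adj (fun hh => h.ne (congrArg Subtype.val hh)) (Or.inl h)
        refine ⟨Walk.cons hadj tw, ?_⟩
        intro z hz
        rw [Walk.support_cons] at hz
        rcases List.mem_cons.1 hz with rfl | hz
        · exact huA
        · exact htw z hz
      · intro hu
        exact ⟨u', hu', hqA u' q.start_mem_support, ⟨u, hu, Reachable.refl _, h.symm⟩, tw, htw⟩
    · obtain ⟨x, hx, hxA, ⟨w', hw', hre, hadjx⟩, tw, htw⟩ := (ih hv hqA).2 hu'
      constructor
      · intro hu
        by_cases heq : u = x
        · subst heq
          exact ⟨tw, htw⟩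
        · have hK : IsCompOf G X
              (Subtype.val '' ((G.induce Xᶜ).connectedComponentMk ⟨u', hu'⟩).supp) := ⟨_, rfl⟩
          have hadj : (torso G X).Adj ⟨u, hu⟩ ⟨x, hx⟩ := by
            refine torso_adj (fun hh => heq (congrArg Subtype.val hh))
              (Or.inr ⟨_, hK, ⟨u', ⟨⟨u', hu'⟩, ?_, rfl⟩, h⟩,
                ⟨w', ⟨⟨w', hw'⟩, ?_, rfl⟩, hadjx⟩⟩)
            · exact (ConnectedComponent.mem_supp_iff _ _).2 rfl
            · exact (ConnectedComponent.mem_supp_iff _ _).2 (ConnectedComponent.sound hre)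
          refine ⟨Walk.cons hadj tw, ?_⟩
          intro z hz
          rw [Walk.support_cons] at hz
          rcases List.mem_cons.1 hz with rfl | hz
          · exact huA
          · exact htw z hz
      · intro hu
        have hadj' : (G.induce Xᶜ).Adj ⟨u', hu'⟩ ⟨u, hu⟩ := h.symm
        exact ⟨x, hx, hxA, ⟨w', hw', hre.trans hadj'.reachable, hadjx⟩, tw, htw⟩

end Helpers

lemma bag_hits {W T : Type} [Finite T] [Nonempty T]
    {H : SimpleGraph W} {Tg : SimpleGraph T} {β : T → Set W}
    (hdec : IsTreeDecomp H Tg β) (F : Set (Set W))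
    (hFne : ∀ f ∈ F, f.Nonempty)
    (hFconn : ∀ f ∈ F, ∀ u ∈ f, ∀ v ∈ f, ∃ p : H.Walk u v, ∀ z ∈ p.support, z ∈ f)
    (hFtouch : ∀ f₁ ∈ F, ∀ f₂ ∈ F, (f₁ ∩ f₂).Nonempty ∨ ∃ u ∈ f₁, ∃ v ∈ f₂, H.Adj u v) :
    ∃ t, ∀ f ∈ F, (β t ∩ f).Nonempty := by
  classical
  obtain ⟨htree, hcover, hedge, hbagconn⟩ := hdec
  by_contra hcon
  push_neg at hcon
  choose f hfF hfemp using hcon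
  set Tf : T → Set T := fun t => {s | (β s ∩ f t).Nonempty} with hTf
  have subtree : ∀ (v : W) {s₁ s₂ : T}, v ∈ β s₁ → v ∈ β s₂ →
      ∃ w : Tg.Walk s₁ s₂, ∀ z ∈ w.support, v ∈ β z := by
    intro v s₁ s₂ h1 h2
    exact induce_to_walk (⟨s₁, h1⟩ : {t | v ∈ β t}) ⟨s₂, h2⟩
      ((hbagconn v).preconnected _ _)
  have lift : ∀ (t : T) {a c : W} (p : H.Walk a c), (∀ z ∈ p.support, z ∈ f t) →
      ∀ {s₁ s₂ : T}, a ∈ β s₁ → c ∈ β s₂ →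
      ∃ w : Tg.Walk s₁ s₂, ∀ z ∈ w.support, z ∈ Tf t := by
    intro t a c p
    induction p with
    | @nil a =>
      intro hp s₁ s₂ h1 h2
      obtain ⟨w, hw⟩ := subtree a h1 h2
      exact ⟨w, fun z hz => ⟨a, hw z hz, hp a (by simp)⟩⟩
    | @cons a a' c h q ih =>
      intro hp s₁ s₂ h1 h2
      obtain ⟨s', hs'a, hs'a'⟩ := hedge a a' h
      obtain ⟨w₁, hw₁⟩ := subtree a h1 hs'a
      obtain ⟨w₂, hw₂⟩ := ih (fun z hz => hp z (by simp [hz])) hs'a' h2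
      refine ⟨w₁.append w₂, ?_⟩
      intro z hz
      rw [Walk.support_append] at hz
      rcases List.mem_append.1 hz with hz | hz
      · exact ⟨a, hw₁ z hz, hp a (by simp)⟩
      · exact hw₂ z (List.mem_of_mem_tail hz)
  have Tfconn : ∀ t, ∀ s₁ ∈ Tf t, ∀ s₂ ∈ Tf t,
      ∃ w : Tg.Walk s₁ s₂, ∀ z ∈ w.support, z ∈ Tf t := by
    intro t s₁ hs₁ s₂ hs₂
    obtain ⟨v₁, hv₁b, hv₁f⟩ := hs₁
    obtain ⟨v₂, hv₂b, hv₂f⟩ := hs₂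
    obtain ⟨p, hp⟩ := hFconn (f t) (hfF t) v₁ hv₁f v₂ hv₂f
    exact lift t p hp hv₁b hv₂b
  have Tfne : ∀ t, (Tf t).Nonempty := by
    intro t
    obtain ⟨v, hv⟩ := hFne (f t) (hfF t)
    obtain ⟨s, hs⟩ := hcover v
    exact ⟨s, v, hs, hv⟩
  have hnotin : ∀ t, t ∉ Tf t := by
    intro t ht
    have : (β t ∩ f t).Nonempty := ht
    rw [hfemp t] at this
    exact Set.not_nonempty_empty this
  have sigma : ∀ t : T, ∃ b, Tg.Adj t b ∧ ∀ s ∈ Tf t, ∃ w : Tg.Walk b s, t ∉ w.support := by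
    intro t
    obtain ⟨s₀, hs₀⟩ := Tfne t
    have hts₀ : t ≠ s₀ := fun h => hnotin t (h ▸ hs₀)
    obtain ⟨p0⟩ := htree.isConnected.preconnected t s₀
    obtain ⟨b, hadj, q, hq⟩ := Walk.not_nil_iff.1 (Walk.not_nil_of_ne hts₀ (p := p0.toPath.val))
    have hqpath : q.IsPath ∧ t ∉ q.support := by
      have := p0.toPath.2
      rw [hq, Walk.cons_isPath_iff] at this
      exact ⟨this.1, this.2⟩
    refine ⟨b, hadj, ?_⟩
    intro s hs
    obtain ⟨w₂, hw₂⟩ := Tfconn t s₀ hs₀ s hs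
    refine ⟨q.append w₂, ?_⟩
    intro hmem
    rw [Walk.support_append] at hmem
    rcases List.mem_append.1 hmem with hmem | hmem
    · exact hqpath.2 hmem
    · exact hnotin t (hw₂ t (List.mem_of_mem_tail hmem))
  choose σ hσadj hσw using sigma
  have nodouble : ∀ a b : T, Tg.Adj a b → σ a = b → σ b = a → False := by
    intro a b hab hsa hsb
    subst hsa
    have hcommon : ∃ s, s ∈ Tf a ∧ s ∈ Tf (σ a) := by
      rcases hFtouch (f a) (hfF a) (f (σ a)) (hfF (σ a)) with ⟨v, hv1, hv2⟩ |
        ⟨x, hx, y, hy, hxy⟩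
      · obtain ⟨s, hs⟩ := hcover v
        exact ⟨s, ⟨v, hs, hv1⟩, ⟨v, hs, hv2⟩⟩
      · obtain ⟨s, hsx, hsy⟩ := hedge x y hxy
        exact ⟨s, ⟨x, hsx, hx⟩, ⟨y, hsy, hy⟩⟩
    obtain ⟨s, hsa', hsb'⟩ := hcommon
    obtain ⟨w₁, hw₁⟩ := hσw a s hsa'
    have h2 : ∃ w : Tg.Walk a s, σ a ∉ w.support := by
      have := hσw (σ a) s hsb'
      rw [hsb] at this
      exact this
    obtain ⟨w₂, hw₂⟩ := h2
    have hW : s(a, σ a) ∉ (w₂.append w₁.reverse).edges := by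
      intro hmem
      rw [Walk.edges_append, List.mem_append] at hmem
      rcases hmem with hmem | hmem
      · exact hw₂ (Walk.snd_mem_support_of_mem_edges w₂ hmem)
      · rw [Walk.edges_reverse, List.mem_reverse] at hmem
        exact hw₁ (Walk.fst_mem_support_of_mem_edges w₁ hmem)
    have hreach : (Tg \ fromEdgeSet {s(a, σ a)}).Reachable a (σ a) :=
      reachable_delete_edges_iff_exists_walk.2 ⟨w₂.append w₁.reverse, hW⟩
    have hbridge := (isAcyclic_iff_forall_adj_isBridge.1 htree.IsAcyclic) (hσadj a)
    exact isBridge_iff.1 hbridge hreach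
  haveI : Fintype T := Fintype.ofFinite T
  haveI : Fintype Tg.edgeSet := Fintype.ofFinite _
  have hinj : Function.Injective (fun t => (⟨s(t, σ t), hσadj t⟩ : Tg.edgeSet)) := by
    intro t₁ t₂ h
    replace h := Sym2.eq_iff.1 (congrArg Subtype.val h)
    rcases h with ⟨h1, _⟩ | ⟨h1, h2⟩
    · exact h1
    · exact (nodouble t₂ t₁ (by rw [h1]; exact hσadj t₂) h1.symm h2).elim
  have hle : Nat.card T ≤ Nat.card Tg.edgeSet := Nat.card_le_card_of_injective _ hinj
  have hcard := htree.card_edgeFinset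
  rw [edgeFinset_card] at hcard
  rw [← Nat.card_eq_fintype_card (α := T), ← Nat.card_eq_fintype_card (α := Tg.edgeSet)] at hcard
  have hpos : 0 < Nat.card T := Nat.card_pos
  omega

/-- **Lemma 11.3.** Let `C` be a nonempty proper minor-closed graph class. Every strict
`C`-bramble in a graph `G` admits a hitting set of size at most `C`-tw(G) + 1. -/
theorem strict_bramble_has_small_hitting_set (C : GraphClass)
    (hne : NonemptyClass C) (hmc : MinorClosed C) (hproper : ProperClass C)
    {V : Type} [Finite V] (G : SimpleGraph V) (B : Set G.Subgraph)
    (hB : IsStrictBramble C G B) :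
    ∃ S : Set V, (∀ b ∈ B, (S ∩ b.verts).Nonempty) ∧ S.ncard ≤ Htw C G + 1 := by
  classical
  rcases Set.eq_empty_or_nonempty B with rfl | ⟨b₀, hb₀⟩
  · exact ⟨∅, by simp, by simp⟩
  have hWne : {k | ∃ X : Set V, CompsIn C G X ∧ HasTWLE (torso G X) k}.Nonempty := by
    refine ⟨Nat.card V, Set.univ, ?_, ?_⟩
    · intro K hK
      exfalso
      obtain ⟨D, -⟩ := hK
      haveI : IsEmpty ↥((Set.univ : Set V)ᶜ) := ⟨fun x => x.2 (Set.mem_univ _)⟩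
      exact D.ind fun v => isEmptyElim v
    · refine ⟨PUnit, inferInstance, ⊥, fun _ => Set.univ, ⟨⟨?_, isAcyclic_bot⟩, ?_, ?_, ?_⟩, ?_⟩
      · exact connected_of_subsingleton _
      · exact fun v => ⟨PUnit.unit, trivial⟩
      · exact fun u v _ => ⟨PUnit.unit, trivial, trivial⟩
      · intro v
        haveI : Nonempty ↥{t : PUnit | v ∈ Set.univ} := ⟨⟨PUnit.unit, trivial⟩⟩
        exact connected_of_subsingleton _
      · intro t
        rw [Set.ncard_univ]
        have h1 : Nat.card ↥(Set.univ : Set V) = Nat.card V :=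
          Nat.card_congr (Equiv.Set.univ V)
        omega
  have hmem : Htw C G ∈ {k | ∃ X : Set V, CompsIn C G X ∧ HasTWLE (torso G X) k} :=
    Nat.sInf_mem hWne
  obtain ⟨X, hComps, Tt, hTfin, Tg, β, hdec, hbag⟩ := hmem
  haveI := hTfin
  have hmeets : ∀ b ∈ B, ∃ x, x ∈ X ∧ x ∈ b.verts := by
    intro b hbB
    by_contra hno
    push_neg at hno
    have hsub : b.verts ⊆ Xᶜ := fun x hx hxX => hno x hxX hx
    have hconn := hB.1 b hbB
    obtain ⟨v₀, hv₀⟩ := hconn.nonempty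
    have hbK : ∀ u ∈ b.verts, u ∈ Subtype.val ''
        ((G.induce Xᶜ).connectedComponentMk ⟨v₀, hsub hv₀⟩).supp := by
      intro u hu
      obtain ⟨p, hp⟩ := subgraph_walk hconn hv₀ hu
      have hre := walk_to_induce p (fun z hz => hsub (hp z hz)) (hsub hv₀) (hsub hu)
      exact ⟨⟨u, hsub hu⟩, (ConnectedComponent.mem_supp_iff _ _).2
        (ConnectedComponent.sound hre.symm), rfl⟩
    set K := Subtype.val '' ((G.induce Xᶜ).connectedComponentMk ⟨v₀, hsub hv₀⟩).supp with hKdef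
    have hminor : b.coe.IsMinorOf (G.induce K) := by
      refine ⟨fun w => {⟨↑w, hbK ↑w w.2⟩}, fun w => ⟨_, rfl⟩, ?_, ?_, ?_⟩
      · intro w
        exact connected_of_subsingleton _
      · intro w₁ w₂ hne12
        rw [Set.disjoint_singleton_left, Set.mem_singleton_iff]
        intro hh
        rw [Subtype.mk.injEq] at hh
        exact hne12 (Subtype.ext hh)
      · intro w₁ w₂ hadj
        exact ⟨_, rfl, _, rfl, b.coe_adj_sub w₁ w₂ hadj⟩
    exact hB.2.2 b hbB (hmc _ _ _ _ hminor (hComps K ⟨_, hKdef⟩))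
  obtain ⟨x₀, hx₀X, hx₀b⟩ := hmeets b₀ hb₀
  obtain ⟨t₀, ht₀⟩ := hdec.2.1 ⟨x₀, hx₀X⟩
  haveI : Nonempty Tt := ⟨t₀⟩
  set F : Set (Set ↥X) := (fun b : G.Subgraph => {x : ↥X | ↑x ∈ b.verts}) '' B with hF
  have hFne : ∀ f ∈ F, f.Nonempty := by
    rintro f ⟨b, hbB, rfl⟩
    obtain ⟨x, hxX, hxb⟩ := hmeets b hbB
    exact ⟨⟨x, hxX⟩, hxb⟩
  have hFconn : ∀ f ∈ F, ∀ u ∈ f, ∀ v ∈ f,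
      ∃ p : (torso G X).Walk u v, ∀ z ∈ p.support, z ∈ f := by
    rintro f ⟨b, hbB, rfl⟩ u hu v hv
    obtain ⟨p, hp⟩ := subgraph_walk (hB.1 b hbB) hu hv
    obtain ⟨w, hw⟩ := (torso_walk p v.2 hp).1 u.2
    exact ⟨w, hw⟩
  have hFtouch : ∀ f₁ ∈ F, ∀ f₂ ∈ F, (f₁ ∩ f₂).Nonempty ∨
      ∃ u ∈ f₁, ∃ v ∈ f₂, (torso G X).Adj u v := by
    rintro f₁ ⟨b₁, hb₁, rfl⟩ f₂ ⟨b₂, hb₂, rfl⟩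
    obtain ⟨v, hv₁, hv₂⟩ := hB.2.1 b₁ hb₁ b₂ hb₂
    by_cases hvX : v ∈ X
    · exact Or.inl ⟨⟨v, hvX⟩, hv₁, hv₂⟩
    · obtain ⟨x₁, hx₁X, hx₁b⟩ := hmeets b₁ hb₁
      obtain ⟨p₁, hp₁⟩ := subgraph_walk (hB.1 b₁ hb₁) hv₁ hx₁b
      obtain ⟨y₁, hy₁X, hy₁A, ⟨w₁', hw₁', hre₁, hadj₁⟩, -, -⟩ := (torso_walk p₁ hx₁X hp₁).2 hvX
      obtain ⟨x₂, hx₂X, hx₂b⟩ := hmeets b₂ hb₂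
      obtain ⟨p₂, hp₂⟩ := subgraph_walk (hB.1 b₂ hb₂) hv₂ hx₂b
      obtain ⟨y₂, hy₂X, hy₂A, ⟨w₂', hw₂', hre₂, hadj₂⟩, -, -⟩ := (torso_walk p₂ hx₂X hp₂).2 hvX
      by_cases hyy : y₁ = y₂
      · subst hyy
        exact Or.inl ⟨⟨y₁, hy₁X⟩, hy₁A, hy₂A⟩
      · refine Or.inr ⟨⟨y₁, hy₁X⟩, hy₁A, ⟨y₂, hy₂X⟩, hy₂A,
          torso_adj (fun hh => hyy (congrArg Subtype.val hh)) (Or.inr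
            ⟨Subtype.val '' ((G.induce Xᶜ).connectedComponentMk ⟨v, hvX⟩).supp, ⟨_, rfl⟩,
             ⟨w₁', ⟨⟨w₁', hw₁'⟩, (ConnectedComponent.mem_supp_iff _ _).2
               (ConnectedComponent.sound hre₁), rfl⟩, hadj₁⟩,
             ⟨w₂', ⟨⟨w₂', hw₂'⟩, (ConnectedComponent.mem_supp_iff _ _).2
               (ConnectedComponent.sound hre₂), rfl⟩, hadj₂⟩⟩)⟩
  obtain ⟨t, ht⟩ := bag_hits hdec F hFne hFconn hFtouch
  refine ⟨Subtype.val '' β t, ?_, ?_⟩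
  · intro b hbB
    obtain ⟨x, hxβ, hxf⟩ := ht _ ⟨b, hbB, rfl⟩
    exact ⟨↑x, ⟨x, hxβ, rfl⟩, hxf⟩
  · rw [Set.ncard_image_of_injective _ Subtype.coe_injective]
    exact hbag t
end

section
/- Let H be a nonempty proper minor-closed graph class, let q ∈ ℕ and p ≥ 1 be integers, and let G be a graph that admits an H-tree decomposition of width at most q. Assume that G does not contain p+1 pairwise vertex-disjoint subgraphs each of which contains, as a minor, a member of conn(Z) for some Z ∈ obs(H). Then there exists a set S ⊆ V(G) with |S| ≤ (q+1)·(2p−1) such that every connected component of G−S belongs to H. (Inductive claim in the proof of Lemma 12.3) -/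
open SimpleGraph

set_option autoImplicit false
set_option maxHeartbeats 1000000

/-- `Z` is an obstruction of the class `C`: `Z ∉ C`, and `Z` is minor-minimal with this
property, i.e. every minor of `Z` outside `C` has `Z` itself as a minor. -/
def IsObstruction (C : GraphClass) {W : Type} [Finite W] (Z : SimpleGraph W) : Prop :=
  ¬ C W Z ∧
    ∀ (U : Type) [Finite U] (Y : SimpleGraph U), Y.IsMinorOf Z → ¬ C U Y → Z.IsMinorOf Y
/-- `Y ∈ conn(Z)`: `Y` is a connected graph on the vertex set of `Z` containing `Z` as a
spanning subgraph and edge-minimal with these properties. -/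
def InConn {W : Type} (Z Y : SimpleGraph W) : Prop :=
  Z ≤ Y ∧ Y.Connected ∧ ∀ Y' : SimpleGraph W, Z ≤ Y' → Y' ≤ Y → Y'.Connected → Y' = Y


namespace Aux
open SimpleGraph

/-- Walks with support inside a set. -/
def Linked {V : Type} (G : SimpleGraph V) (S : Set V) : Prop :=
  ∀ u, u ∈ S → ∀ v, v ∈ S → ∃ w : G.Walk u v, ∀ x ∈ w.support, x ∈ S

lemma reachable_induce_of_walk {V : Type} {G : SimpleGraph V} {S : Set V} :
    ∀ {u v : V} (w : G.Walk u v), (∀ x ∈ w.support, x ∈ S) →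
      ∀ (hu : u ∈ S) (hv : v ∈ S), (G.induce S).Reachable ⟨u, hu⟩ ⟨v, hv⟩ := by
  intro u v w
  induction w with
  | nil => intro _ hu _; rfl
  | @cons a b c hadj p ih =>
    intro hsupp hu hv
    have hb : b ∈ S := hsupp b (by simp)
    have h1 : (G.induce S).Adj ⟨a, hu⟩ ⟨b, hb⟩ := by
      simp [SimpleGraph.comap, hadj]
    exact (h1.reachable).trans (ih (fun x hx => hsupp x (by simp [hx])) hb hv)

lemma walk_of_induce_reachable {V : Type} {G : SimpleGraph V} {S : Set V} {a b : ↥S}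
    (h : (G.induce S).Reachable a b) :
    ∃ w : G.Walk a.1 b.1, ∀ x ∈ w.support, x ∈ S := by
  obtain ⟨p⟩ := h
  refine ⟨p.map (SimpleGraph.Embedding.induce S).toHom, ?_⟩
  intro x hx
  replace hx : x ∈ (p.map (SimpleGraph.Embedding.induce S).toHom).support := hx
  rw [SimpleGraph.Walk.support_map] at hx
  obtain ⟨y, _, rfl⟩ := List.mem_map.mp hx
  exact y.2

lemma induce_connected_iff_linked {V : Type} {G : SimpleGraph V} {S : Set V} :
    (G.induce S).Connected ↔ S.Nonempty ∧ Linked G S := by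
  constructor
  · intro h
    obtain ⟨⟨a, ha⟩⟩ := h.nonempty
    refine ⟨⟨a, ha⟩, ?_⟩
    intro u hu v hv
    exact walk_of_induce_reachable (h ⟨u, hu⟩ ⟨v, hv⟩)
  · rintro ⟨⟨a, ha⟩, hl⟩
    have : Nonempty ↥S := ⟨⟨a, ha⟩⟩
    refine ⟨fun u v => ?_⟩
    obtain ⟨w, hw⟩ := hl u.1 u.2 v.1 v.2
    exact reachable_induce_of_walk w hw u.2 v.2

lemma linked_of_induce_connected {V : Type} {G : SimpleGraph V} {S : Set V}
    (h : (G.induce S).Connected) : Linked G S :=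
  (induce_connected_iff_linked.mp h).2

lemma IsMinorOf.of_le_left {W V : Type} {H H' : SimpleGraph W} {G : SimpleGraph V}
    (hle : H ≤ H') (h : H'.IsMinorOf G) : H.IsMinorOf G := by
  obtain ⟨φ, h1, h2, h3, h4⟩ := h
  exact ⟨φ, h1, h2, h3, fun w₁ w₂ ha => h4 w₁ w₂ (hle ha)⟩

lemma IsMinorOf.of_le_right {W V : Type} {H : SimpleGraph W} {G G' : SimpleGraph V}
    (hle : G ≤ G') (h : H.IsMinorOf G) : H.IsMinorOf G' := by
  obtain ⟨φ, h1, h2, h3, h4⟩ := h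
  refine ⟨φ, h1, fun w => (h2 w).mono ?_, h3, fun w₁ w₂ ha => ?_⟩
  · intro a b hab
    exact hle hab
  · obtain ⟨v₁, hv₁, v₂, hv₂, hadj⟩ := h4 w₁ w₂ ha
    exact ⟨v₁, hv₁, v₂, hv₂, hle hadj⟩


lemma isMinorOf_refl {W : Type} (H : SimpleGraph W) : H.IsMinorOf H := by
  refine ⟨fun w => {w}, fun w => ⟨w, rfl⟩, fun w => ?_, ?_, ?_⟩
  · rw [induce_singleton_eq_top]
    exact connected_top
  · intro w₁ w₂ hne
    simp [Set.disjoint_singleton, hne]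
  · intro w₁ w₂ ha
    exact ⟨w₁, rfl, w₂, rfl, ha⟩

lemma IsMinorOf.congr_left {W W' V : Type} {H : SimpleGraph W} {H' : SimpleGraph W'}
    {G : SimpleGraph V} (e : H ≃g H') (h : H.IsMinorOf G) : H'.IsMinorOf G := by
  obtain ⟨φ, h1, h2, h3, h4⟩ := h
  refine ⟨fun w => φ (e.symm w), fun w => h1 _, fun w => h2 _, ?_, ?_⟩
  · intro w₁ w₂ hne
    exact h3 _ _ (fun hc => hne (by simpa using congrArg e hc))
  · intro w₁ w₂ ha
    exact h4 _ _ (e.symm.map_adj_iff.mpr ha)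

/-- Induced subgraphs transported along an isomorphism. -/
noncomputable def isoInduceImage {V V' : Type} {G : SimpleGraph V} {G' : SimpleGraph V'}
    (e : G ≃g G') (s : Set V) : G.induce s ≃g G'.induce (⇑e '' s) where
  toEquiv := (e.toEquiv.image s)
  map_rel_iff' := by
    intro a b
    simp only [Equiv.image, Equiv.coe_fn_mk]
    constructor
    · intro h
      exact e.map_adj_iff.mp h
    · intro h
      exact e.map_adj_iff.mpr h

lemma IsMinorOf.congr_right {W V V' : Type} {H : SimpleGraph W} {G : SimpleGraph V}
    {G' : SimpleGraph V'} (e : G ≃g G') (h : H.IsMinorOf G) : H.IsMinorOf G' := by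
  obtain ⟨φ, h1, h2, h3, h4⟩ := h
  refine ⟨fun w => ⇑e '' φ w, fun w => (h1 w).image _, fun w => ?_, ?_, ?_⟩
  · exact ((isoInduceImage e (φ w)).connected_iff).mp (h2 w)
  · intro w₁ w₂ hne
    exact (Set.disjoint_image_iff e.toEquiv.injective).mpr (h3 w₁ w₂ hne)
  · intro w₁ w₂ ha
    obtain ⟨v₁, hv₁, v₂, hv₂, hadj⟩ := h4 w₁ w₂ ha
    exact ⟨e v₁, ⟨v₁, hv₁, rfl⟩, e v₂, ⟨v₂, hv₂, rfl⟩, e.map_adj_iff.mpr hadj⟩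

lemma isMinorOf_induce_of_subset {V : Type} (G : SimpleGraph V) {A B : Set V} (hAB : A ⊆ B) :
    (G.induce A).IsMinorOf (G.induce B) := by
  refine ⟨fun a => {⟨a.1, hAB a.2⟩}, fun a => ⟨_, rfl⟩, fun a => ?_, ?_, ?_⟩
  · rw [induce_singleton_eq_top]; exact connected_top
  · intro a₁ a₂ hne
    simp only [Set.disjoint_singleton]
    intro hc
    exact hne (Subtype.val_injective (congrArg (Subtype.val : ↥B → V) hc))
  · intro a₁ a₂ ha
    exact ⟨_, rfl, _, rfl, ha⟩

lemma isMinorOf_induce {V : Type} (G : SimpleGraph V) (A : Set V) :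
    (G.induce A).IsMinorOf G := by
  exact IsMinorOf.congr_right (induceUnivIso G) (isMinorOf_induce_of_subset G (Set.subset_univ A))

/-- `induce` of `induce`. -/
noncomputable def isoInduceInduce {V : Type} (G : SimpleGraph V) (B : Set V) (A : Set ↥B) :
    (G.induce B).induce A ≃g G.induce (Subtype.val '' A) where
  toEquiv := Equiv.Set.image Subtype.val A Subtype.val_injective
  map_rel_iff' := by
    intro a b
    constructor
    · intro h; exact h
    · intro h; exact h

lemma IsMinorOf.trans {U W V : Type} {F : SimpleGraph U} {H : SimpleGraph W} {G : SimpleGraph V}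
    (h1 : F.IsMinorOf H) (h2 : H.IsMinorOf G) : F.IsMinorOf G := by
  obtain ⟨φ, hφ1, hφ2, hφ3, hφ4⟩ := h1
  obtain ⟨ψ, hψ1, hψ2, hψ3, hψ4⟩ := h2
  classical
  refine ⟨fun u => ⋃ w ∈ φ u, ψ w, ?_, ?_, ?_, ?_⟩
  · intro u
    obtain ⟨w, hw⟩ := hφ1 u
    obtain ⟨v, hv⟩ := hψ1 w
    exact ⟨v, Set.mem_biUnion hw hv⟩
  · intro u
    rw [induce_connected_iff_linked]
    constructor
    · obtain ⟨w, hw⟩ := hφ1 u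
      obtain ⟨v, hv⟩ := hψ1 w
      exact ⟨v, Set.mem_biUnion hw hv⟩
    · -- linked
      have key : ∀ (w₁ w₂ : W) (wk : H.Walk w₁ w₂), (∀ x ∈ wk.support, x ∈ φ u) →
          ∀ a, a ∈ ψ w₁ → ∀ b, b ∈ ψ w₂ →
          ∃ p : G.Walk a b, ∀ x ∈ p.support, x ∈ ⋃ w ∈ φ u, ψ w := by
        intro w₁ w₂ wk
        induction wk with
        | @nil w =>
          intro hsupp a ha b hb
          obtain ⟨p, hp⟩ := linked_of_induce_connected (hψ2 w) a ha b hb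
          exact ⟨p, fun x hx => Set.mem_biUnion (hsupp w (by simp)) (hp x hx)⟩
        | @cons w₁ w₂ w₃ hadj wk ih =>
          intro hsupp a ha b hb
          obtain ⟨v₁, hv₁, v₂, hv₂, hG⟩ := hψ4 w₁ w₂ hadj
          obtain ⟨p₁, hp₁⟩ := linked_of_induce_connected (hψ2 w₁) a ha v₁ hv₁
          obtain ⟨p₂, hp₂⟩ := ih (fun x hx => hsupp x (by simp [hx])) v₂ hv₂ b hb
          refine ⟨p₁.append (SimpleGraph.Walk.cons hG p₂), ?_⟩
          intro x hx
          rw [SimpleGraph.Walk.mem_support_append_iff] at hx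
          rcases hx with hx | hx
          · exact Set.mem_biUnion (hsupp w₁ (by simp)) (hp₁ x hx)
          · rw [SimpleGraph.Walk.support_cons] at hx
            rcases List.mem_cons.mp hx with rfl | hx
            · exact Set.mem_biUnion (hsupp w₁ (by simp)) hv₁
            · exact hp₂ x hx
      intro a ha b hb
      simp only [Set.mem_iUnion] at ha hb
      obtain ⟨w₁, hw₁, ha⟩ := ha
      obtain ⟨w₂, hw₂, hb⟩ := hb
      obtain ⟨wk, hwk⟩ := linked_of_induce_connected (hφ2 u) w₁ hw₁ w₂ hw₂
      exact key w₁ w₂ wk hwk a ha b hb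
  · intro u₁ u₂ hne
    rw [Set.disjoint_left]
    intro v hv1 hv2
    simp only [Set.mem_iUnion] at hv1 hv2
    obtain ⟨w₁, hw₁, hv1⟩ := hv1
    obtain ⟨w₂, hw₂, hv2⟩ := hv2
    by_cases hw : w₁ = w₂
    · subst hw
      exact (hφ3 u₁ u₂ hne).ne_of_mem hw₁ hw₂ rfl
    · exact (hψ3 w₁ w₂ hw).ne_of_mem hv1 hv2 rfl
  · intro u₁ u₂ ha
    obtain ⟨w₁, hw₁, w₂, hw₂, hadj⟩ := hφ4 u₁ u₂ ha
    obtain ⟨v₁, hv₁, v₂, hv₂, hG⟩ := hψ4 w₁ w₂ hadj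
    exact ⟨v₁, Set.mem_biUnion hw₁ hv₁, v₂, Set.mem_biUnion hw₂ hv₂, hG⟩


/-! ### Edge counting -/

noncomputable def ecard {W : Type} (H : SimpleGraph W) : ℕ := H.edgeSet.ncard

lemma ecard_le_of_le {W : Type} [Finite W] {H H' : SimpleGraph W} (h : H ≤ H') :
    ecard H ≤ ecard H' :=
  Set.ncard_le_ncard (SimpleGraph.edgeSet_mono h) (Set.toFinite _)

lemma eq_of_le_of_ecard_le {W : Type} [Finite W] {H H' : SimpleGraph W} (h : H ≤ H')
    (hc : ecard H' ≤ ecard H) : H = H' := by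
  have := Set.eq_of_subset_of_ncard_le (SimpleGraph.edgeSet_mono h) hc (Set.toFinite _)
  exact SimpleGraph.edgeSet_inj.mp this

lemma ecard_congr {W W' : Type} {H : SimpleGraph W} {H' : SimpleGraph W'} (e : H ≃g H') :
    ecard H = ecard H' := by
  unfold ecard
  rw [← Nat.card_coe_set_eq, ← Nat.card_coe_set_eq]
  exact Nat.card_congr e.mapEdgeSet

lemma ecard_le_sq {W : Type} [Finite W] (H : SimpleGraph W) :
    ecard H ≤ Nat.card W * Nat.card W := by
  have h1 : ecard H ≤ (Set.univ : Set (Sym2 W)).ncard :=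
    Set.ncard_le_ncard (Set.subset_univ _) (Set.toFinite _)
  have h2 : (Set.univ : Set (Sym2 W)).ncard = Nat.card (Sym2 W) := Set.ncard_univ _
  have h3 : Nat.card (Sym2 W) ≤ Nat.card (W × W) := by
    refine Nat.card_le_card_of_surjective (Quot.mk _) ?_
    intro z
    induction z using Sym2.ind with
    | _ x y => exact ⟨(x, y), rfl⟩
  rw [Nat.card_prod] at h3
  omega

lemma IsMinorOf.card_le {W V : Type} [Finite V] {H : SimpleGraph W} {G : SimpleGraph V}
    (h : H.IsMinorOf G) : Nat.card W ≤ Nat.card V := by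
  obtain ⟨φ, h1, h2, h3, _⟩ := h
  have : Function.Injective (fun w => (h1 w).some) := by
    intro w₁ w₂ he
    have he' : (h1 w₁).some = (h1 w₂).some := he
    by_contra hne
    exact (h3 w₁ w₂ hne).ne_of_mem (h1 w₁).some_mem (he' ▸ (h1 w₂).some_mem) he'
  exact Nat.card_le_card_of_injective _ this

/-- Key decrease lemma for extraction. -/
lemma minor_decrease {W V : Type} [Finite V] [Finite W] {Y : SimpleGraph W} {Z : SimpleGraph V}
    (h : Y.IsMinorOf Z) :
    Nat.card W < Nat.card V ∨
      (Nat.card W = Nat.card V ∧ (ecard Y < ecard Z ∨ Z.IsMinorOf Y)) := by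
  rcases lt_or_ge (Nat.card W) (Nat.card V) with hlt | hge
  · exact Or.inl hlt
  have hcard : Nat.card W = Nat.card V := le_antisymm (IsMinorOf.card_le h) hge
  right
  refine ⟨hcard, ?_⟩
  obtain ⟨φ, h1, h2, h3, h4⟩ := h
  set f : W → V := fun w => (h1 w).some with hf
  have hinj : Function.Injective f := by
    intro w₁ w₂ he
    have he' : (h1 w₁).some = (h1 w₂).some := he
    by_contra hne
    exact (h3 w₁ w₂ hne).ne_of_mem (h1 w₁).some_mem (he' ▸ (h1 w₂).some_mem) he'
  have hbij : Function.Bijective f :=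
    (Nat.bijective_iff_injective_and_card f).mpr ⟨hinj, hcard⟩
  have hsingle : ∀ w, φ w = {f w} := by
    intro w
    apply Set.eq_of_subset_of_subset
    · intro v hv
      obtain ⟨w', rfl⟩ := hbij.2 v
      by_contra hne
      have hww : w ≠ w' := by
        rintro rfl
        exact hne rfl
      exact (h3 w w' hww).ne_of_mem hv (h1 w').some_mem rfl
    · intro v hv
      rw [Set.mem_singleton_iff] at hv
      subst hv
      exact (h1 w).some_mem
  set e : W ≃ V := Equiv.ofBijective f hbij with he
  have hiso : SimpleGraph.comap f Z ≃g Z := by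
    refine ⟨e, ?_⟩
    intro a b
    rfl
  have hle : Y ≤ SimpleGraph.comap f Z := by
    intro w₁ w₂ ha
    obtain ⟨v₁, hv₁, v₂, hv₂, hadj⟩ := h4 w₁ w₂ ha
    rw [hsingle w₁, Set.mem_singleton_iff] at hv₁
    rw [hsingle w₂, Set.mem_singleton_iff] at hv₂
    subst hv₁; subst hv₂
    exact hadj
  have hec : ecard (SimpleGraph.comap f Z) = ecard Z := ecard_congr hiso
  rcases lt_or_ge (ecard Y) (ecard Z) with h' | h'
  · exact Or.inl h'
  · right
    have : Y = SimpleGraph.comap f Z := eq_of_le_of_ecard_le hle (by omega)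
    subst this
    exact IsMinorOf.congr_left hiso (isMinorOf_refl _)


/-! ### Class facts and obstruction extraction -/

section ClassFacts

variable {C : GraphClass}

lemma C_of_isEmpty (hnecl : NonemptyClass C) (hmc : MinorClosed C)
    {W : Type} [Finite W] [IsEmpty W] (Z : SimpleGraph W) : C W Z := by
  obtain ⟨V₀, i₀, G₀, h₀⟩ := hnecl
  refine hmc V₀ W G₀ Z ?_ h₀
  exact ⟨fun w => isEmptyElim w, fun w => isEmptyElim w, fun w => isEmptyElim w,
    fun w => isEmptyElim w, fun w => isEmptyElim w⟩

lemma obstruction_nonempty (hnecl : NonemptyClass C) (hmc : MinorClosed C)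
    {W : Type} [Finite W] {Z : SimpleGraph W} (h : IsObstruction C Z) : Nonempty W := by
  by_contra hW
  have : IsEmpty W := not_nonempty_iff.mp hW
  exact h.1 (C_of_isEmpty hnecl hmc Z)

theorem exists_obstruction (hnecl : NonemptyClass C) (hmc : MinorClosed C)
    {κ : Type} [Finite κ] (K : SimpleGraph κ) (hK : ¬ C κ K) :
    ∃ (W : Type) (_ : Finite W) (Z : SimpleGraph W), IsObstruction C Z ∧ Z.IsMinorOf K := by
  classical
  -- measure
  let m : ℕ → ℕ → ℕ := fun n e => n * (n * n + 1) + e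
  suffices h : ∀ (N : ℕ) (κ : Type) (_ : Finite κ) (K : SimpleGraph κ),
      m (Nat.card κ) (ecard K) ≤ N → ¬ C κ K →
      ∃ (W : Type) (_ : Finite W) (Z : SimpleGraph W), IsObstruction C Z ∧ Z.IsMinorOf K by
    exact h _ κ ‹_› K le_rfl hK
  intro N
  induction N with
  | zero =>
    intro κ _ K hm hK
    exfalso
    have h0 : Nat.card κ = 0 := by
      by_contra h
      have : 1 ≤ Nat.card κ := Nat.one_le_iff_ne_zero.mpr h
      have : 1 * (1 * 1 + 1) ≤ m (Nat.card κ) (ecard K) := by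
        have := Nat.mul_le_mul this (by nlinarith : 1 * 1 + 1 ≤ Nat.card κ * Nat.card κ + 1)
        simp only [m]
        omega
      omega
    have : IsEmpty κ := by
      rw [Nat.card_eq_zero] at h0
      rcases h0 with h | h
      · exact h
      · exact absurd ‹Finite κ› (by simpa using h.not_finite)
    exact hK (C_of_isEmpty hnecl hmc K)
  | succ N ih =>
    intro κ _ K hm hK
    by_cases hobs : IsObstruction C K
    · exact ⟨κ, ‹_›, K, hobs, isMinorOf_refl K⟩
    · -- find a strictly smaller bad minor
      have : ∃ (U : Type) (_ : Finite U) (Y : SimpleGraph U),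
          Y.IsMinorOf K ∧ ¬ C U Y ∧ ¬ K.IsMinorOf Y := by
        by_contra hc
        push_neg at hc
        refine hobs ⟨hK, ?_⟩
        intro U instU Y hmin hnC
        exact hc U instU Y hmin hnC
      obtain ⟨U, instU, Y, hYK, hYC, hKY⟩ := this
      -- measure decrease
      have hdec := minor_decrease (Y := Y) (Z := K) hYK
      have hlt : m (Nat.card U) (ecard Y) < m (Nat.card κ) (ecard K) := by
        rcases hdec with hlt | ⟨heq, hor⟩
        · have h1 : ecard Y ≤ Nat.card U * Nat.card U := ecard_le_sq Y
          have h2 : Nat.card U + 1 ≤ Nat.card κ := hlt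
          set a := Nat.card U with ha
          set n := Nat.card κ with hn
          have h4 : (a+1)*((a+1)*(a+1)+1) ≤ n*(n*n+1) :=
            Nat.mul_le_mul h2 (by have := Nat.mul_le_mul h2 h2; omega)
          have h5 : a*(a*a+1)+a*a < (a+1)*((a+1)*(a+1)+1) := by nlinarith
          simp only [m]
          omega
        · rcases hor with hlt' | hmin'
          · simp only [m, heq]
            omega
          · exact absurd hmin' hKY
      have hm' : m (Nat.card U) (ecard Y) ≤ N := by omega
      obtain ⟨W, instW, Z, hZ, hZY⟩ := ih U instU Y hm' hYC
      exact ⟨W, instW, Z, hZ, IsMinorOf.trans hZY hYK⟩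

end ClassFacts


/-! ### Extending an obstruction minor to a `conn` minor -/

lemma exists_boundary_edge {κ : Type} {K : SimpleGraph κ} (hconn : K.Connected)
    {S : Set κ} (hS : S.Nonempty) (hne : S ≠ Set.univ) :
    ∃ u ∈ S, ∃ v, v ∉ S ∧ K.Adj u v := by
  obtain ⟨u₀, hu₀⟩ := hS
  have : ∃ v₀, v₀ ∉ S := by
    by_contra h
    push_neg at h
    exact hne (Set.eq_univ_of_forall h)
  obtain ⟨v₀, hv₀⟩ := this
  obtain ⟨w⟩ := hconn u₀ v₀
  clear hne
  induction w with
  | nil => exact absurd hu₀ hv₀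
  | @cons a b c hadj p ih =>
    by_cases hb : b ∈ S
    · exact ih hb hv₀
    · exact ⟨a, hu₀, b, hb, hadj⟩

theorem exists_conn_minor {κ : Type} [Finite κ] {K : SimpleGraph κ} (hconn : K.Connected)
    {W : Type} [Finite W] [Nonempty W] {Z : SimpleGraph W} (hZ : Z.IsMinorOf K) :
    ∃ Y : SimpleGraph W, InConn Z Y ∧ Y.IsMinorOf K := by
  classical
  -- models
  let Model : (W → Set κ) → Prop := fun φ =>
    (∀ w, (φ w).Nonempty) ∧ (∀ w, (K.induce (φ w)).Connected) ∧
    (∀ w₁ w₂, w₁ ≠ w₂ → Disjoint (φ w₁) (φ w₂)) ∧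
    (∀ w₁ w₂, Z.Adj w₁ w₂ → ∃ v₁ ∈ φ w₁, ∃ v₂ ∈ φ w₂, K.Adj v₁ v₂)
  have hZM : ∃ φ, Model φ := hZ
  -- maximize the size of the union
  let s : Set ℕ := {n | ∃ φ, Model φ ∧ n = (⋃ w, φ w).ncard}
  have hs_ne : s.Nonempty := by
    obtain ⟨φ, hφ⟩ := hZM
    exact ⟨_, φ, hφ, rfl⟩
  have hs_bdd : BddAbove s := by
    refine ⟨Nat.card κ, ?_⟩
    rintro n ⟨φ, hφ, rfl⟩
    rw [← Set.ncard_univ]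
    exact Set.ncard_le_ncard (Set.subset_univ _) (Set.toFinite _)
  obtain ⟨φ, hφ, hφmax⟩ := Nat.sSup_mem hs_ne hs_bdd
  -- the union is everything
  have huniv : (⋃ w, φ w) = Set.univ := by
    by_contra hne
    have hSne : (⋃ w, φ w).Nonempty := by
      obtain ⟨w⟩ := ‹Nonempty W›
      obtain ⟨v, hv⟩ := hφ.1 w
      exact ⟨v, Set.mem_iUnion.mpr ⟨w, hv⟩⟩
    obtain ⟨u, hu, v, hv, hadj⟩ := exists_boundary_edge hconn hSne hne
    obtain ⟨w₀, hw₀⟩ := Set.mem_iUnion.mp hu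
    -- enlarge φ w₀
    set φ' : W → Set κ := Function.update φ w₀ (insert v (φ w₀)) with hφ'
    have hφ'w₀ : φ' w₀ = insert v (φ w₀) := Function.update_self _ _ _
    have hφ'other : ∀ w, w ≠ w₀ → φ' w = φ w := fun w hw => Function.update_of_ne hw _ _
    have hM' : Model φ' := by
      refine ⟨?_, ?_, ?_, ?_⟩
      · intro w
        by_cases h : w = w₀
        · subst h; rw [hφ'w₀]; exact ⟨v, Set.mem_insert _ _⟩
        · rw [hφ'other w h]; exact hφ.1 w
      · intro w
        by_cases h : w = w₀
        · subst h
          rw [hφ'w₀]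
          have : (K.induce (φ w ∪ {v})).Connected := by
            have h := SimpleGraph.induce_union_connected (hφ.2.1 w).preconnected
              (SimpleGraph.induce_pair_connected_of_adj hadj).preconnected
              ⟨u, hw₀, Set.mem_insert _ _⟩
            rwa [Set.union_insert, Set.insert_eq_of_mem (Set.mem_union_left _ hw₀)] at h
          rwa [Set.union_comm, ← Set.insert_eq] at this
        · rw [hφ'other w h]; exact hφ.2.1 w
      · intro w₁ w₂ hne'
        have hv1 : ∀ w, w ≠ w₀ → v ∉ φ w := by
          intro w _ hc
          exact hv (Set.mem_iUnion.mpr ⟨w, hc⟩)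
        by_cases h1 : w₁ = w₀ <;> by_cases h2 : w₂ = w₀
        · exact absurd (h1.trans h2.symm) hne'
        · subst h1
          rw [hφ'w₀, hφ'other w₂ h2]
          rw [Set.disjoint_left]
          intro x hx hx2
          rcases Set.mem_insert_iff.mp hx with rfl | hx
          · exact hv1 w₂ h2 hx2
          · exact (hφ.2.2.1 _ w₂ hne').ne_of_mem hx hx2 rfl
        · subst h2
          rw [hφ'w₀, hφ'other w₁ h1]
          rw [Set.disjoint_right]
          intro x hx hx2
          rcases Set.mem_insert_iff.mp hx with rfl | hx
          · exact hv1 w₁ h1 hx2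
          · exact (hφ.2.2.1 w₁ _ hne').ne_of_mem hx2 hx rfl
        · rw [hφ'other w₁ h1, hφ'other w₂ h2]
          exact hφ.2.2.1 w₁ w₂ hne'
      · intro w₁ w₂ ha
        obtain ⟨v₁, hv₁, v₂, hv₂, hK⟩ := hφ.2.2.2 w₁ w₂ ha
        refine ⟨v₁, ?_, v₂, ?_, hK⟩
        · by_cases h : w₁ = w₀
          · subst h; rw [hφ'w₀]; exact Set.mem_insert_of_mem _ hv₁
          · rw [hφ'other w₁ h]; exact hv₁
        · by_cases h : w₂ = w₀
          · subst h; rw [hφ'w₀]; exact Set.mem_insert_of_mem _ hv₂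
          · rw [hφ'other w₂ h]; exact hv₂
    have hunion' : (⋃ w, φ' w) = insert v (⋃ w, φ w) := by
      apply Set.eq_of_subset_of_subset
      · intro x hx
        obtain ⟨w, hw⟩ := Set.mem_iUnion.mp hx
        by_cases h : w = w₀
        · rw [h] at hw
          rw [hφ'w₀] at hw
          rcases Set.mem_insert_iff.mp hw with rfl | hw
          · exact Set.mem_insert _ _
          · exact Set.mem_insert_of_mem _ (Set.mem_iUnion.mpr ⟨w₀, hw⟩)
        · rw [hφ'other w h] at hw
          exact Set.mem_insert_of_mem _ (Set.mem_iUnion.mpr ⟨w, hw⟩)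
      · intro x hx
        rcases Set.mem_insert_iff.mp hx with rfl | hx
        · exact Set.mem_iUnion.mpr ⟨w₀, by rw [hφ'w₀]; exact Set.mem_insert _ _⟩
        · obtain ⟨w, hw⟩ := Set.mem_iUnion.mp hx
          by_cases h : w = w₀
          · rw [h] at hw
            exact Set.mem_iUnion.mpr ⟨w₀, by rw [hφ'w₀]; exact Set.mem_insert_of_mem _ hw⟩
          · exact Set.mem_iUnion.mpr ⟨w, by rw [hφ'other w h]; exact hw⟩
    have hbig : (⋃ w, φ' w).ncard = (⋃ w, φ w).ncard + 1 := by
      rw [hunion']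
      exact Set.ncard_insert_of_notMem hv (Set.toFinite _)
    have hmem : (⋃ w, φ' w).ncard ∈ s := ⟨φ', hM', rfl⟩
    have := le_csSup hs_bdd hmem
    omega
  -- the quotient graph
  let Z'' : SimpleGraph W := {
    Adj := fun w₁ w₂ => w₁ ≠ w₂ ∧ ∃ a ∈ φ w₁, ∃ b ∈ φ w₂, K.Adj a b
    symm := ⟨fun w₁ w₂ h =>
      ⟨Ne.symm h.1, by obtain ⟨_, a, ha, b, hb, hadj⟩ := h; exact ⟨b, hb, a, ha, hadj.symm⟩⟩⟩
    loopless := ⟨fun w h => h.1 rfl⟩ }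
  have hZle : Z ≤ Z'' := by
    intro w₁ w₂ ha
    exact ⟨ha.ne, hφ.2.2.2 w₁ w₂ ha⟩
  have hZ''conn : Z''.Connected := by
    have key : ∀ (u v : κ) (wk : K.Walk u v) (wu wv : W), u ∈ φ wu → v ∈ φ wv →
        Z''.Reachable wu wv := by
      intro u v wk
      induction wk with
      | @nil a =>
        intro wu wv hu hv
        by_cases h : wu = wv
        · subst h; rfl
        · exact absurd rfl ((hφ.2.2.1 wu wv h).ne_of_mem hu hv)
      | @cons a b c hadj p ih =>
        intro wu wv hu hv
        have hb : b ∈ ⋃ w, φ w := huniv ▸ Set.mem_univ b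
        obtain ⟨wb, hwb⟩ := Set.mem_iUnion.mp hb
        by_cases h : wu = wb
        · subst h; exact ih wu wv hwb hv
        · exact (SimpleGraph.Adj.reachable
            (show Z''.Adj wu wb from ⟨h, a, hu, b, hwb, hadj⟩)).trans (ih wb wv hwb hv)
    refine ⟨fun wu wv => ?_⟩
    obtain ⟨u, hu⟩ := hφ.1 wu
    obtain ⟨v, hv⟩ := hφ.1 wv
    obtain ⟨wk⟩ := hconn u v
    exact key u v wk wu wv hu hv
  have hZ''min : Z''.IsMinorOf K := ⟨φ, hφ.1, hφ.2.1, hφ.2.2.1, fun w₁ w₂ h => h.2⟩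
  -- choose a minimal connected graph between Z and Z''
  let t : Set ℕ := {n | ∃ Y : SimpleGraph W, Z ≤ Y ∧ Y ≤ Z'' ∧ Y.Connected ∧ ecard Y = n}
  have ht_ne : t.Nonempty := ⟨ecard Z'', Z'', hZle, le_rfl, hZ''conn, rfl⟩
  obtain ⟨Y₀, hY₀1, hY₀2, hY₀3, hY₀4⟩ := Nat.sInf_mem ht_ne
  refine ⟨Y₀, ⟨hY₀1, hY₀3, ?_⟩, IsMinorOf.of_le_left hY₀2 hZ''min⟩
  intro Y' h1 h2 h3
  have hY't : ecard Y' ∈ t := ⟨Y', h1, le_trans h2 hY₀2, h3, rfl⟩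
  have := Nat.sInf_le hY't
  exact eq_of_le_of_ecard_le h2 (by omega)


/-! ### Bad sets -/

/-- `A` hosts a connected witness of some obstruction's `conn` family. -/
def BadSet (C : GraphClass) {V : Type} [Finite V] (G : SimpleGraph V) (A : Set V) : Prop :=
  (G.induce A).Connected ∧
    ∃ (W : Type) (_ : Finite W) (Z Y : SimpleGraph W),
      IsObstruction C Z ∧ InConn Z Y ∧ Y.IsMinorOf (G.induce A)

section Bad

variable {C : GraphClass}
variable {V : Type} [Finite V] {G : SimpleGraph V}

lemma badSet_of_not_C (hnecl : NonemptyClass C) (hmc : MinorClosed C)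
    {A : Set V} (hconn : (G.induce A).Connected)
    (hC : ¬ C ↥A (G.induce A)) : BadSet C G A := by
  obtain ⟨W, instW, Z, hobs, hmin⟩ := exists_obstruction hnecl hmc (G.induce A) hC
  have : Nonempty W := obstruction_nonempty hnecl hmc hobs
  obtain ⟨Y, hY1, hY2⟩ := exists_conn_minor hconn hmin
  exact ⟨hconn, W, instW, Z, Y, hobs, hY1, hY2⟩

lemma badSet_subset_not_C (hmc : MinorClosed C) {A B : Set V} (hbad : BadSet C G A) (hAB : A ⊆ B)
    (hC : C ↥B (G.induce B)) : False := by
  obtain ⟨_, W, instW, Z, Y, hobs, hconn, hmin⟩ := hbad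
  have hZY : Z.IsMinorOf Y := IsMinorOf.of_le_left hconn.1 (isMinorOf_refl Y)
  have hZA : Z.IsMinorOf (G.induce A) := IsMinorOf.trans hZY hmin
  have hZB : Z.IsMinorOf (G.induce B) := IsMinorOf.trans hZA (isMinorOf_induce_of_subset G hAB)
  exact hobs.1 (hmc _ _ _ _ hZB hC)

/-- a component of `G - S` is connected as an induced subgraph. -/
lemma isCompOf_connected {S K : Set V} (h : IsCompOf G S K) :
    (G.induce K).Connected ∧ K ⊆ Sᶜ := by
  obtain ⟨D, rfl⟩ := h
  have hsub : Subtype.val '' D.supp ⊆ Sᶜ := by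
    rintro x ⟨y, _, rfl⟩
    exact y.2
  refine ⟨induce_connected_iff_linked.mpr ⟨?_, ?_⟩, hsub⟩
  · obtain ⟨v, hv⟩ := D.exists_rep
    exact ⟨v.1, v, by rw [SimpleGraph.ConnectedComponent.mem_supp_iff]; exact hv, rfl⟩
  · rintro u ⟨u', hu', rfl⟩ v ⟨v', hv', rfl⟩
    rw [SimpleGraph.ConnectedComponent.mem_supp_iff] at hu' hv'
    have hreach : (G.induce Sᶜ).Reachable u' v' := by
      rw [← SimpleGraph.ConnectedComponent.eq, hu', hv']
    obtain ⟨w0⟩ := hreach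
    refine ⟨w0.map (SimpleGraph.Embedding.induce Sᶜ).toHom, ?_⟩
    intro x hx
    replace hx : x ∈ (w0.map (SimpleGraph.Embedding.induce Sᶜ).toHom).support := hx
    rw [SimpleGraph.Walk.support_map] at hx
    obtain ⟨y, hy, rfl⟩ := List.mem_map.mp hx
    refine ⟨y, ?_, rfl⟩
    rw [SimpleGraph.ConnectedComponent.mem_supp_iff]
    -- y is on a walk from u' to v', so it is reachable from u'
    have hry : (G.induce Sᶜ).Reachable u' y := by
      classical
      exact ⟨w0.takeUntil y hy⟩
    rw [← (SimpleGraph.ConnectedComponent.eq.mpr hry), hu']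

/-- a connected set avoiding `S` lies inside a member of the class, given `CompsIn`. -/
lemma C_of_connected_avoiding (hmc : MinorClosed C) {S' A : Set V} (hcomps : CompsIn C G S')
    (hconn : (G.induce A).Connected) (hdisj : A ⊆ S'ᶜ) : C ↥A (G.induce A) := by
  obtain ⟨⟨a, ha⟩⟩ := hconn.nonempty
  have haS : a ∈ S'ᶜ := hdisj ha
  set D := (G.induce S'ᶜ).connectedComponentMk ⟨a, haS⟩ with hD
  set K : Set V := Subtype.val '' D.supp with hK
  have hCK : C ↥K (G.induce K) := hcomps K ⟨D, rfl⟩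
  have hAK : A ⊆ K := by
    intro v hv
    obtain ⟨w, hw⟩ := linked_of_induce_connected hconn a ha v hv
    have hreach : (G.induce S'ᶜ).Reachable ⟨a, haS⟩ ⟨v, hdisj hv⟩ :=
      reachable_induce_of_walk w (fun x hx => hdisj (hw x hx)) _ _
    refine ⟨⟨v, hdisj hv⟩, ?_, rfl⟩
    rw [SimpleGraph.ConnectedComponent.mem_supp_iff]
    exact SimpleGraph.ConnectedComponent.eq.mpr hreach.symm
  -- A is an induced subgraph of K
  have h1 : (G.induce A).IsMinorOf (G.induce K) := isMinorOf_induce_of_subset G hAK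
  exact hmc _ _ _ _ h1 hCK

lemma C_of_empty (hnecl : NonemptyClass C) (hmc : MinorClosed C) {A : Set V} (hA : A = ∅) :
    C ↥A (G.induce A) := by
  subst hA
  have : IsEmpty ↥(∅ : Set V) := by simp
  exact C_of_isEmpty hnecl hmc _

end Bad


/-! ### Rooted tree machinery -/

section Tree

variable {T : Type} {Tg : SimpleGraph T}

/-- `s` lies below (or at) `t` with respect to root `r`:
every walk from `s` to the root passes through `t`. -/
def Below (Tg : SimpleGraph T) (r t : T) : Set T :=
  {s | ∀ w : Tg.Walk s r, t ∈ w.support}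

lemma self_mem_below (r t : T) : t ∈ Below Tg r t :=
  fun w => w.start_mem_support

lemma mem_below_root (r s : T) : s ∈ Below Tg r r :=
  fun w => w.end_mem_support

lemma below_trans {r c t s : T} (h1 : s ∈ Below Tg r c) (h2 : c ∈ Below Tg r t) :
    s ∈ Below Tg r t := by
  classical
  intro w
  have hc : c ∈ w.support := h1 w
  have := h2 (w.dropUntil c hc)
  exact SimpleGraph.Walk.support_dropUntil_subset w hc this

lemma below_antisymm (hconn : Tg.Connected) {r c t : T} (h1 : c ∈ Below Tg r t)
    (h2 : t ∈ Below Tg r c) : c = t := by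
  classical
  by_contra hne
  let s : Set ℕ := {n | ∃ w : Tg.Walk c r, w.length = n}
  have hs_ne : s.Nonempty := by
    obtain ⟨w⟩ := hconn c r
    exact ⟨w.length, w, rfl⟩
  obtain ⟨w, hw⟩ := Nat.sInf_mem hs_ne
  have ht : t ∈ w.support := h1 w
  set w2 := w.dropUntil t ht with hw2
  have hc : c ∈ w2.support := h2 w2
  set w3 := w2.dropUntil c hc with hw3
  have hlen1 : (w.takeUntil t ht).length + w2.length = w.length := by
    rw [hw2, ← SimpleGraph.Walk.length_append, SimpleGraph.Walk.take_spec]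
  have hlen2 : (w2.takeUntil c hc).length + w3.length = w2.length := by
    rw [hw3, ← SimpleGraph.Walk.length_append, SimpleGraph.Walk.take_spec]
  have hpos : 0 < (w.takeUntil t ht).length := by
    by_contra h
    push_neg at h
    have h0 : (w.takeUntil t ht).length = 0 := by omega
    have := SimpleGraph.Walk.eq_of_length_eq_zero h0
    exact hne this
  have h3 : w3.length ∈ s := ⟨w3, rfl⟩
  have := Nat.sInf_le h3
  omega

/-- The set of vertices of `G` appearing in bags below `t`. -/
def Dset {V : Type} (Tg : SimpleGraph T) (β : T → Set V) (r t : T) : Set V :=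
  {v | ∃ s ∈ Below Tg r t, v ∈ β s}

/-- connectivity avoiding a vertex `t`. -/
def ConnAvoid (Tg : SimpleGraph T) (t s s' : T) : Prop :=
  ∃ w : Tg.Walk s s', t ∉ w.support

lemma connAvoid_refl {t s : T} (h : s ≠ t) : ConnAvoid Tg t s s :=
  ⟨SimpleGraph.Walk.nil, by simp [Ne.symm h]⟩

lemma ConnAvoid.symm {t s s' : T} (h : ConnAvoid Tg t s s') : ConnAvoid Tg t s' s := by
  obtain ⟨w, hw⟩ := h
  exact ⟨w.reverse, by rwa [SimpleGraph.Walk.support_reverse, List.mem_reverse]⟩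

lemma ConnAvoid.trans {t s s' s'' : T} (h1 : ConnAvoid Tg t s s') (h2 : ConnAvoid Tg t s' s'') :
    ConnAvoid Tg t s s'' := by
  obtain ⟨w1, hw1⟩ := h1
  obtain ⟨w2, hw2⟩ := h2
  refine ⟨w1.append w2, ?_⟩
  rw [SimpleGraph.Walk.mem_support_append_iff]
  rintro (h | h) <;> [exact hw1 h; exact hw2 h]

lemma below_of_connAvoid {r t s s' : T} (h1 : s ∈ Below Tg r t) (h2 : ConnAvoid Tg t s s') :
    s' ∈ Below Tg r t := by
  intro w
  obtain ⟨w0, hw0⟩ := h2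
  have := h1 (w0.append w)
  rw [SimpleGraph.Walk.mem_support_append_iff] at this
  rcases this with h | h
  · exact absurd h hw0
  · exact h

lemma connAvoid_ne_left {t s s' : T} (h : ConnAvoid Tg t s s') : s ≠ t := by
  obtain ⟨w, hw⟩ := h
  rintro rfl
  exact hw w.start_mem_support

lemma connAvoid_ne_right {t s s' : T} (h : ConnAvoid Tg t s s') : s' ≠ t := by
  obtain ⟨w, hw⟩ := h
  rintro rfl
  exact hw w.end_mem_support

/-- Extracting the last edge before reaching `t` on a walk to the root. -/
lemma extract_child {r t s : T} (w : Tg.Walk s r) (ht : t ∈ w.support) (hne : s ≠ t) :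
    ∃ (c : T) (q : Tg.Walk c s), Tg.Adj t c ∧ t ∉ q.support ∧ c ∈ w.support := by
  classical
  set a := w.takeUntil t ht with ha
  have hcount : a.support.count t = 1 := SimpleGraph.Walk.count_support_takeUntil_eq_one w ht
  obtain ⟨c, hadj, q, hq⟩ := SimpleGraph.Walk.exists_eq_cons_of_ne (Ne.symm hne) a.reverse
  have hsup : a.reverse.support = t :: q.support := by rw [hq, SimpleGraph.Walk.support_cons]
  have hrevcount : a.reverse.support.count t = 1 := by
    rw [SimpleGraph.Walk.support_reverse, List.count_reverse]
    exact hcount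
  have htq : t ∉ q.support := by
    rw [hsup] at hrevcount
    simp only [List.count_cons_self] at hrevcount
    rw [← List.count_pos_iff]
    omega
  refine ⟨c, q, hadj, htq, ?_⟩
  have hcq : c ∈ a.reverse.support := by
    rw [hsup]
    exact List.mem_cons_of_mem _ q.start_mem_support
  rw [SimpleGraph.Walk.support_reverse, List.mem_reverse] at hcq
  exact SimpleGraph.Walk.support_takeUntil_subset w ht hcq

/-- Two distinct neighbours of `t` cannot be joined avoiding `t` in an acyclic graph. -/
lemma child_unique (hacyc : Tg.IsAcyclic) {t c c₂ : T} (h1 : Tg.Adj t c) (h2 : Tg.Adj t c₂)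
    (h : ConnAvoid Tg t c c₂) : c = c₂ := by
  classical
  by_contra hne
  obtain ⟨w, hw⟩ := h
  have hp1 : (SimpleGraph.Walk.cons h2 SimpleGraph.Walk.nil).IsPath := by
    rw [SimpleGraph.Walk.cons_isPath_iff]
    refine ⟨SimpleGraph.Walk.IsPath.nil, ?_⟩
    simp [h2.ne]
  have hp2 : (SimpleGraph.Walk.cons h1 w.bypass).IsPath := by
    rw [SimpleGraph.Walk.cons_isPath_iff]
    exact ⟨SimpleGraph.Walk.bypass_isPath w,
      fun hc => hw (SimpleGraph.Walk.support_bypass_subset w hc)⟩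
  have := hacyc.path_unique ⟨_, hp1⟩ ⟨_, hp2⟩
  have hsupp : (SimpleGraph.Walk.cons h2 (SimpleGraph.Walk.nil : Tg.Walk c₂ c₂)).support
      = (SimpleGraph.Walk.cons h1 w.bypass).support := by
    rw [show (SimpleGraph.Walk.cons h2 SimpleGraph.Walk.nil) = (SimpleGraph.Walk.cons h1 w.bypass)
      from congrArg Subtype.val this]
  have hc : c ∈ (SimpleGraph.Walk.cons h2 (SimpleGraph.Walk.nil : Tg.Walk c₂ c₂)).support := by
    rw [hsupp, SimpleGraph.Walk.support_cons]
    exact List.mem_cons_of_mem _ w.bypass.start_mem_support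
  simp only [SimpleGraph.Walk.support_cons, SimpleGraph.Walk.support_nil, List.mem_cons,
    List.mem_singleton, List.not_mem_nil, or_false] at hc
  rcases hc with hc | hc
  · exact h1.ne' hc
  · exact hne hc

/-- The branch lemma: from `s₀` strictly below `t` there is a child `c` of `t`
capturing everything connected to `s₀` avoiding `t`. -/
lemma branch_lemma (htree : Tg.IsTree) {r t s₀ : T} (hs₀ : s₀ ∈ Below Tg r t) (hne : s₀ ≠ t) :
    ∃ c, c ∈ Below Tg r t ∧ c ≠ t ∧
      ∀ s', s' ∈ Below Tg r t → ConnAvoid Tg t s₀ s' → s' ∈ Below Tg r c := by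
  classical
  obtain ⟨w₀⟩ := htree.isConnected s₀ r
  have ht₀ : t ∈ w₀.support := hs₀ w₀
  obtain ⟨c, q₀, hadj, htq₀, _⟩ := extract_child w₀ ht₀ hne
  have hca : ConnAvoid Tg t s₀ c := ConnAvoid.symm ⟨q₀, htq₀⟩
  refine ⟨c, below_of_connAvoid hs₀ hca, hadj.ne', ?_⟩
  intro s' hs' hconn'
  intro w
  have hs'ne : s' ≠ t := connAvoid_ne_right hconn'
  have ht' : t ∈ w.support := hs' w
  obtain ⟨c₂, q₂, hadj₂, htq₂, hc₂w⟩ := extract_child w ht' hs'ne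
  have hchain : ConnAvoid Tg t c c₂ :=
    ConnAvoid.trans (ConnAvoid.trans (ConnAvoid.symm hca) hconn') (ConnAvoid.symm ⟨q₂, htq₂⟩)
  have : c = c₂ := child_unique htree.IsAcyclic hadj hadj₂ hchain
  rw [this]
  exact hc₂w

/-- Existence of a minimal element for a predicate on nodes. -/
lemma exists_minimal_below (hconn : Tg.Connected) [Finite T] {r : T} {Q : T → Prop}
    (h : ∃ t, Q t) : ∃ t, Q t ∧ ∀ c, c ∈ Below Tg r t → c ≠ t → ¬ Q c := by
  classical
  obtain ⟨t₀, ht₀⟩ := h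
  suffices h : ∀ (n : ℕ) (t : T), Q t → (Below Tg r t).ncard ≤ n →
      ∃ t', Q t' ∧ ∀ c, c ∈ Below Tg r t' → c ≠ t' → ¬ Q c by
    exact h (Below Tg r t₀).ncard t₀ ht₀ le_rfl
  intro n
  induction n with
  | zero =>
    intro t hQ hcard
    exfalso
    have : t ∈ Below Tg r t := self_mem_below r t
    have : 0 < (Below Tg r t).ncard := (Set.ncard_pos (Set.toFinite _)).mpr ⟨t, this⟩
    omega
  | succ n ih =>
    intro t hQ hcard
    by_cases hc : ∃ c, c ∈ Below Tg r t ∧ c ≠ t ∧ Q c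
    · obtain ⟨c, hc1, hc2, hc3⟩ := hc
      have hss : Below Tg r c ⊂ Below Tg r t := by
        constructor
        · intro s hs
          exact below_trans hs hc1
        · intro hsub
          have : t ∈ Below Tg r c := hsub (self_mem_below r t)
          exact hc2 (below_antisymm hconn hc1 this)
      have : (Below Tg r c).ncard < (Below Tg r t).ncard :=
        Set.ncard_lt_ncard hss (Set.toFinite _)
      exact ih c hc3 (by omega)
    · push_neg at hc
      exact ⟨t, hQ, fun c h1 h2 => hc c h1 h2⟩

end Tree


/-! ### Tree decomposition lemmas -/

section TD

variable {V T : Type} {G : SimpleGraph V} {Tg : SimpleGraph T} {β : T → Set V}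

lemma bag_connAvoid (htd : IsTreeDecomp G Tg β) {v : V} {s s' t : T}
    (hs : v ∈ β s) (hs' : v ∈ β s') (ht : v ∉ β t) : ConnAvoid Tg t s s' := by
  obtain ⟨w, hw⟩ := linked_of_induce_connected (htd.2.2.2 v) s hs s' hs'
  exact ⟨w, fun hc => ht (hw t hc)⟩

lemma mem_below_of_D (htd : IsTreeDecomp G Tg β) {r t : T} {v : V}
    (hv : v ∈ Dset Tg β r t) (hvt : v ∉ β t) {s' : T} (hs' : v ∈ β s') :
    s' ∈ Below Tg r t := by
  obtain ⟨s, hsB, hsv⟩ := hv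
  exact below_of_connAvoid hsB (bag_connAvoid htd hsv hs' hvt)

lemma edge_Dset (htd : IsTreeDecomp G Tg β) {r t : T} {u v : V} (hadj : G.Adj u v)
    (hu : u ∈ Dset Tg β r t) (hut : u ∉ β t) : v ∈ Dset Tg β r t := by
  obtain ⟨s₂, hu₂, hv₂⟩ := htd.2.2.1 u v hadj
  exact ⟨s₂, mem_below_of_D htd hu hut hu₂, hv₂⟩

lemma adhesion_subset {d : T} : adhesion Tg β d ⊆ β d := by
  intro v hv
  simp only [adhesion, Set.mem_iUnion] at hv
  obtain ⟨d', _, hv, _⟩ := hv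
  exact hv

lemma leaf_only_bag (htd : IsTreeDecomp G Tg β) {d : T} (hleaf : TreeLeaf Tg d) {v : V}
    (hv : v ∈ β d) (hvadh : v ∉ adhesion Tg β d) : ∀ s, v ∈ β s → s = d := by
  intro s hs
  by_contra hne
  obtain ⟨w, hw⟩ := linked_of_induce_connected (htd.2.2.2 v) d hv s hs
  obtain ⟨c, hadj, q, hq⟩ := SimpleGraph.Walk.exists_eq_cons_of_ne (Ne.symm hne) w
  have hc : v ∈ β c := by
    apply hw
    rw [hq, SimpleGraph.Walk.support_cons]
    exact List.mem_cons_of_mem _ q.start_mem_support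
  apply hvadh
  simp only [adhesion, Set.mem_iUnion]
  exact ⟨c, hadj, hv, hc⟩

lemma Dset_root (htd : IsTreeDecomp G Tg β) (r : T) (v : V) : v ∈ Dset Tg β r r := by
  obtain ⟨s, hs⟩ := htd.2.1 v
  exact ⟨s, mem_below_root r s, hs⟩

/-- no bad set inside the open interior below a minimal node `t`. -/
lemma no_bad_inner {C : GraphClass} [Finite V] (htree : Tg.IsTree) (htd : IsTreeDecomp G Tg β)
    {r t : T}
    (hmin : ∀ c, c ∈ Below Tg r t → c ≠ t → ¬ ∃ A, A ⊆ Dset Tg β r c ∧ BadSet C G A)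
    {A : Set V} (hA : A ⊆ Dset Tg β r t \ β t) (hbad : BadSet C G A) : False := by
  have hconnA : (G.induce A).Connected := hbad.1
  obtain ⟨hAne, hlink⟩ := induce_connected_iff_linked.mp hconnA
  -- chain of bags along a walk inside A
  have chain : ∀ (u v : V) (wk : G.Walk u v), (∀ x ∈ wk.support, x ∈ A) →
      ∀ s_u, u ∈ β s_u → ∀ s_v, v ∈ β s_v → ConnAvoid Tg t s_u s_v := by
    intro u v wk
    induction wk with
    | @nil a =>
      intro hsupp s_u hu s_v hv
      exact bag_connAvoid htd hu hv (fun hc => ((hA (hsupp a (by simp))).2) hc)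
    | @cons a b c hadj p ih =>
      intro hsupp s_u hu s_v hv
      obtain ⟨s₂, ha₂, hb₂⟩ := htd.2.2.1 a b hadj
      have h1 : ConnAvoid Tg t s_u s₂ :=
        bag_connAvoid htd hu ha₂ (fun hc => ((hA (hsupp a (by simp))).2) hc)
      exact ConnAvoid.trans h1 (ih (fun x hx => hsupp x (by simp [hx])) s₂ hb₂ s_v hv)
  obtain ⟨v₀, hv₀⟩ := hAne
  obtain ⟨s₀, hs₀B, hv₀s₀⟩ := (hA hv₀).1
  have hv₀t : v₀ ∉ β t := (hA hv₀).2
  have hs₀t : s₀ ≠ t := fun hc => hv₀t (hc ▸ hv₀s₀)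
  obtain ⟨c, hcB, hct, hcap⟩ := branch_lemma htree hs₀B hs₀t
  refine hmin c hcB hct ⟨A, ?_, hbad⟩
  intro v hv
  obtain ⟨s_v, hs_v⟩ := htd.2.1 v
  have hs_vB : s_v ∈ Below Tg r t := mem_below_of_D htd (hA hv).1 (hA hv).2 hs_v
  obtain ⟨w, hw⟩ := hlink v₀ hv₀ v hv
  have hca : ConnAvoid Tg t s₀ s_v := chain v₀ v w hw s₀ hv₀s₀ s_v hs_v
  exact ⟨s_v, hcap s_v hs_vB hca, hs_v⟩

end TD


/-! ### Width bounds and deletion -/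

section Width

variable {V T : Type} {Tg : SimpleGraph T} {β : T → Set V}

lemma width_set_finite [Finite T] :
    (insert 0
      ({n | ∃ t, ¬ TreeLeaf Tg t ∧ n = (β t).ncard - 1} ∪
       {n | ∃ d, TreeLeaf Tg d ∧ n = (adhesion Tg β d).ncard - 1})).Finite := by
  apply Set.Finite.insert
  apply Set.Finite.union
  · apply Set.Finite.subset (Set.finite_range (fun t => (β t).ncard - 1))
    rintro n ⟨t, _, rfl⟩
    exact ⟨t, rfl⟩
  · apply Set.Finite.subset (Set.finite_range (fun t => (adhesion Tg β t).ncard - 1))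
    rintro n ⟨t, _, rfl⟩
    exact ⟨t, rfl⟩

lemma width_nonleaf_bag [Finite T] {q : ℕ} (h : HTDwidth Tg β ≤ q) {t : T}
    (ht : ¬ TreeLeaf Tg t) : (β t).ncard ≤ q + 1 := by
  have hmem : (β t).ncard - 1 ∈ insert 0
      ({n | ∃ t, ¬ TreeLeaf Tg t ∧ n = (β t).ncard - 1} ∪
       {n | ∃ d, TreeLeaf Tg d ∧ n = (adhesion Tg β d).ncard - 1}) := by
    exact Set.mem_insert_of_mem _ (Or.inl ⟨t, ht, rfl⟩)
  have := le_csSup (Set.Finite.bddAbove width_set_finite) hmem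
  unfold HTDwidth at h
  omega

lemma width_leaf_adh [Finite T] {q : ℕ} (h : HTDwidth Tg β ≤ q) {d : T}
    (hd : TreeLeaf Tg d) : (adhesion Tg β d).ncard ≤ q + 1 := by
  have hmem : (adhesion Tg β d).ncard - 1 ∈ insert 0
      ({n | ∃ t, ¬ TreeLeaf Tg t ∧ n = (β t).ncard - 1} ∪
       {n | ∃ d, TreeLeaf Tg d ∧ n = (adhesion Tg β d).ncard - 1}) := by
    exact Set.mem_insert_of_mem _ (Or.inr ⟨d, hd, rfl⟩)
  have := le_csSup (Set.Finite.bddAbove width_set_finite) hmem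
  unfold HTDwidth at h
  omega

end Width

section Deletion

variable {V T : Type} [Finite V] {G : SimpleGraph V} {Tg : SimpleGraph T} {β : T → Set V}

/-- Restricting the bags of a tree decomposition after deleting `X`. -/
def restrictBags (β : T → Set V) (X : Set V) : T → Set ↥(Xᶜ) := fun s => {v | v.1 ∈ β s}

lemma restrict_adhesion_sub {X : Set V} {d : T} {x : ↥(Xᶜ)}
    (hx : x ∈ adhesion Tg (restrictBags β X) d) : x.1 ∈ adhesion Tg β d := by
  simp only [adhesion, Set.mem_iUnion] at hx ⊢
  obtain ⟨d', hd', h1, h2⟩ := hx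
  exact ⟨d', hd', h1, h2⟩

lemma delete_htd {C : GraphClass} (hnecl : NonemptyClass C) (hmc : MinorClosed C)
    (htd : IsHTreeDecomp C G Tg β) (X : Set V) :
    IsHTreeDecomp C (G.induce Xᶜ) Tg (restrictBags β X) := by
  obtain ⟨⟨htree, hcover, hedge, hsub⟩, hleaf⟩ := htd
  refine ⟨⟨htree, ?_, ?_, ?_⟩, ?_⟩
  · intro v
    obtain ⟨s, hs⟩ := hcover v.1
    exact ⟨s, hs⟩
  · intro u v hadj
    obtain ⟨s, hs1, hs2⟩ := hedge u.1 v.1 hadj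
    exact ⟨s, hs1, hs2⟩
  · intro v
    exact hsub v.1
  · intro d hd
    set A' : Set ↥(Xᶜ) := restrictBags β X d \ adhesion Tg (restrictBags β X) d with hA'
    have hsubA : Subtype.val '' A' ⊆ β d \ adhesion Tg β d := by
      rintro x ⟨y, hy, rfl⟩
      refine ⟨hy.1, ?_⟩
      intro hc
      apply hy.2
      simp only [adhesion, Set.mem_iUnion] at hc ⊢
      obtain ⟨d', hd', h1, h2⟩ := hc
      exact ⟨d', hd', h1, h2⟩
    have hC0 : C _ (G.induce (β d \ adhesion Tg β d)) := hleaf d hd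
    have hC1 : C _ (G.induce (Subtype.val '' A')) :=
      hmc _ _ _ _ (isMinorOf_induce_of_subset G hsubA) hC0
    have hC2 : C _ ((G.induce Xᶜ).induce A') := by
      refine hmc _ _ _ _ ?_ hC1
      exact IsMinorOf.congr_right (isoInduceInduce G Xᶜ A') (isMinorOf_refl _)
    exact hC2

lemma delete_width [Finite T] {q : ℕ} (hw : HTDwidth Tg β ≤ q) (X : Set V) :
    HTDwidth Tg (restrictBags β X) ≤ q := by
  unfold HTDwidth
  apply csSup_le (by exact ⟨0, Set.mem_insert _ _⟩)
  rintro n hn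
  rcases Set.mem_insert_iff.mp hn with rfl | hn
  · omega
  rcases hn with ⟨t, ht, rfl⟩ | ⟨d, hd, rfl⟩
  · have h1 : (restrictBags β X t).ncard ≤ (β t).ncard := by
      rw [← Set.ncard_image_of_injective (restrictBags β X t) Subtype.val_injective]
      apply Set.ncard_le_ncard _ (Set.toFinite _)
      rintro x ⟨y, hy, rfl⟩
      exact hy
    have := width_nonleaf_bag hw ht
    omega
  · have h1 : (adhesion Tg (restrictBags β X) d).ncard ≤ (adhesion Tg β d).ncard := by
      rw [← Set.ncard_image_of_injective _ Subtype.val_injective]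
      apply Set.ncard_le_ncard _ (Set.toFinite _)
      rintro x ⟨y, hy, rfl⟩
      exact restrict_adhesion_sub hy
    have := width_leaf_adh hw hd
    omega

end Deletion


/-! ### Main induction -/

lemma minor_coe_top_induce {V : Type} {G : SimpleGraph V} {A : Set V} {W : Type}
    {Y : SimpleGraph W} (h : Y.IsMinorOf (G.induce A)) :
    Y.IsMinorOf ((⊤ : G.Subgraph).induce A).coe := by
  rw [← SimpleGraph.induce_eq_coe_induce_top]
  exact h

/-- A packing of `n` disjoint subgraphs each hosting a `conn`-obstruction minor. -/
def Packing (C : GraphClass) {V : Type} (G : SimpleGraph V) (n : ℕ) : Prop :=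
  ∃ D : Fin n → G.Subgraph,
    (∀ i j, i ≠ j → Disjoint (D i).verts (D j).verts) ∧
    ∀ i, ∃ (W : Type) (_ : Finite W) (Z Y : SimpleGraph W),
      IsObstruction C Z ∧ InConn Z Y ∧ Y.IsMinorOf (D i).coe

theorem main_aux (C : GraphClass) (hnecl : NonemptyClass C) (hmc : MinorClosed C) (q : ℕ) :
    ∀ (p : ℕ) (V : Type) (_ : Finite V) (G : SimpleGraph V) (T : Type) (_ : Finite T)
      (Tg : SimpleGraph T) (β : T → Set V),
      IsHTreeDecomp C G Tg β → HTDwidth Tg β ≤ q → ¬ Packing C G (p + 1) →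
      ∃ S : Set V, S.ncard ≤ (q + 1) * (2 * p - 1) ∧ CompsIn C G S := by
  intro p
  induction p with
  | zero =>
    intro V instV G T instT Tg β htd hw hpack
    refine ⟨∅, by simp, ?_⟩
    intro K hK
    by_contra hC
    obtain ⟨hKconn, _⟩ := isCompOf_connected hK
    have hbad : BadSet C G K := badSet_of_not_C hnecl hmc hKconn hC
    apply hpack
    refine ⟨fun _ => (⊤ : G.Subgraph).induce K, ?_, ?_⟩
    · intro i j hij
      exact absurd (Fin.ext (by have := i.2; have := j.2; omega)) hij
    · intro i
      obtain ⟨_, W, instW, Z, Y, h1, h2, h3⟩ := hbad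
      refine ⟨W, instW, Z, Y, h1, h2, ?_⟩
      exact minor_coe_top_induce h3
  | succ p' ih =>
    intro V instV G T instT Tg β htd hw hpack
    classical
    by_cases hbadK : ∃ K, IsCompOf G ∅ K ∧ ¬ C ↥K (G.induce K)
    swap
    · refine ⟨∅, by simp, ?_⟩
      intro K hK
      by_contra hC
      exact hbadK ⟨K, hK, hC⟩
    obtain ⟨K₀, hK₀comp, hK₀C⟩ := hbadK
    obtain ⟨hK₀conn, _⟩ := isCompOf_connected hK₀comp
    have hK₀bad : BadSet C G K₀ := badSet_of_not_C hnecl hmc hK₀conn hK₀C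
    have htree : Tg.IsTree := htd.1.1
    have hTne : Nonempty T := htree.isConnected.nonempty
    set r : T := Classical.arbitrary T with hr
    set Q : T → Prop := fun c => ∃ A, A ⊆ Dset Tg β r c ∧ BadSet C G A with hQ
    have hQr : Q r := ⟨K₀, fun v _ => Dset_root htd.1 r v, hK₀bad⟩
    obtain ⟨t, hQt, hmin⟩ := exists_minimal_below htree.isConnected ⟨r, hQr⟩
    obtain ⟨A₀, hA₀sub, hA₀bad⟩ := hQt
    set X : Set V := Dset Tg β r t with hX
    set S₀ : Set V := if TreeLeaf Tg t then adhesion Tg β t else β t with hS₀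
    have hS₀card : S₀.ncard ≤ q + 1 := by
      rw [hS₀]
      split_ifs with h
      · exact width_leaf_adh hw h
      · exact width_nonleaf_bag hw h
    have hS₀sub : S₀ ⊆ β t := by
      rw [hS₀]; split_ifs with h
      · exact adhesion_subset
      · exact le_rfl
    have hβS₀ : ∀ v, v ∈ β t → v ∉ S₀ → TreeLeaf Tg t ∧ v ∉ adhesion Tg β t := by
      intro v hv hvS
      rw [hS₀] at hvS
      by_cases h : TreeLeaf Tg t
      · rw [if_pos h] at hvS; exact ⟨h, hvS⟩
      · rw [if_neg h] at hvS; exact absurd hv hvS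
    have hβX : β t ⊆ X := fun v hv => ⟨t, self_mem_below r t, hv⟩
    set G' := G.induce Xᶜ with hG'
    set β' := restrictBags β X with hβ'
    have htd' : IsHTreeDecomp C G' Tg β' := delete_htd hnecl hmc htd X
    have hw' : HTDwidth Tg β' ≤ q := delete_width hw X
    -- no (p'+1)-packing in G'
    have hpack' : ¬ Packing C G' (p' + 1) := by
      rintro ⟨D', hdisj', hbad'⟩
      apply hpack
      have lift_verts : ∀ (k : Fin (p' + 1)), Subtype.val '' (D' k).verts ⊆ Xᶜ := by
        rintro k x ⟨y, _, rfl⟩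
        exact y.2
      set AA : Fin (p' + 1 + 1) → Set V := fun i =>
        if h : (i : ℕ) < p' + 1 then Subtype.val '' (D' ⟨i, h⟩).verts else A₀ with hAA
      have hAA_pos : ∀ (i : Fin (p' + 1 + 1)) (h : (i : ℕ) < p' + 1),
          AA i = Subtype.val '' (D' ⟨i, h⟩).verts := by
        intro i h
        simp only [hAA, dif_pos h]
      have hAA_neg : ∀ (i : Fin (p' + 1 + 1)), ¬ (i : ℕ) < p' + 1 → AA i = A₀ := by
        intro i h
        simp only [hAA, dif_neg h]
      refine ⟨fun i => (⊤ : G.Subgraph).induce (AA i), ?_, ?_⟩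
      · intro i j hij
        show Disjoint (AA i) (AA j)
        by_cases hi : (i : ℕ) < p' + 1 <;> by_cases hj : (j : ℕ) < p' + 1
        · rw [hAA_pos i hi, hAA_pos j hj]
          have hne' : (⟨(i : ℕ), hi⟩ : Fin (p' + 1)) ≠ ⟨(j : ℕ), hj⟩ := by
            intro hc
            exact hij (Fin.ext (congrArg (Fin.val : Fin (p' + 1) → ℕ) hc))
          exact (Set.disjoint_image_iff Subtype.val_injective).mpr (hdisj' _ _ hne')
        · rw [hAA_pos i hi, hAA_neg j hj]
          exact Set.disjoint_of_subset (lift_verts _) hA₀sub (disjoint_compl_left)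
        · rw [hAA_neg i hi, hAA_pos j hj]
          exact Set.disjoint_of_subset hA₀sub (lift_verts _) (disjoint_compl_left).symm
        · exfalso
          apply hij
          apply Fin.ext
          have := i.2; have := j.2
          omega
      · intro i
        by_cases hi : (i : ℕ) < p' + 1
        · show ∃ (W : Type) (_ : Finite W) (Z Y : SimpleGraph W),
            IsObstruction C Z ∧ InConn Z Y ∧
              Y.IsMinorOf ((⊤ : G.Subgraph).induce (AA i)).coe
          rw [hAA_pos i hi]
          obtain ⟨W, instW, Z, Y, h1, h2, h3⟩ := hbad' ⟨i, hi⟩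
          refine ⟨W, instW, Z, Y, h1, h2, ?_⟩
          have hle : (D' ⟨i, hi⟩).coe ≤ G'.induce (D' ⟨i, hi⟩).verts := by
            intro a b h
            exact (D' ⟨i, hi⟩).adj_sub h
          have h4 := IsMinorOf.of_le_right hle h3
          have h5 := IsMinorOf.congr_right (isoInduceInduce G Xᶜ (D' ⟨i, hi⟩).verts) h4
          exact minor_coe_top_induce h5
        · show ∃ (W : Type) (_ : Finite W) (Z Y : SimpleGraph W),
            IsObstruction C Z ∧ InConn Z Y ∧
              Y.IsMinorOf ((⊤ : G.Subgraph).induce (AA i)).coe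
          rw [hAA_neg i hi]
          obtain ⟨_, W, instW, Z, Y, h1, h2, h3⟩ := hA₀bad
          exact ⟨W, instW, Z, Y, h1, h2, minor_coe_top_induce h3⟩
    obtain ⟨S', hS'card, hS'comps⟩ := ih ↥Xᶜ inferInstance G' T instT Tg β' htd' hw' hpack'
    refine ⟨S₀ ∪ Subtype.val '' S', ?_, ?_⟩
    · have h1 := Set.ncard_union_le S₀ (Subtype.val '' S')
      rw [Set.ncard_image_of_injective S' Subtype.val_injective] at h1
      have h2 : S₀.ncard + S'.ncard ≤ (q + 1) + (q + 1) * (2 * p' - 1) := by omega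
      have h3 : (q + 1) + (q + 1) * (2 * p' - 1) ≤ (q + 1) * (2 * (p' + 1) - 1) := by
        have h4 : 1 + (2 * p' - 1) ≤ 2 * (p' + 1) - 1 := by omega
        calc (q + 1) + (q + 1) * (2 * p' - 1) = (q + 1) * (1 + (2 * p' - 1)) := by ring
          _ ≤ (q + 1) * (2 * (p' + 1) - 1) := Nat.mul_le_mul_left _ h4
      omega
    · -- components
      intro K hK
      obtain ⟨hKconn, hKS⟩ := isCompOf_connected hK
      have hKS₀ : ∀ v ∈ K, v ∉ S₀ := fun v hv hc => (hKS hv) (Or.inl hc)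
      have hKS' : ∀ v ∈ K, v ∉ Subtype.val '' S' := fun v hv hc => (hKS hv) (Or.inr hc)
      have propagate : ∀ (P : V → Prop),
          (∀ x y, x ∈ K → y ∈ K → G.Adj x y → P x → P y) →
          ∀ a, a ∈ K → P a → ∀ v, v ∈ K → P v := by
        intro P hstep a ha hPa v hv
        obtain ⟨w, hwsupp⟩ := linked_of_induce_connected hKconn a ha v hv
        clear ha hv
        induction w with
        | nil => exact hPa
        | @cons u b c hadj p ihw =>
          refine ihw ?_ (fun x hx => hwsupp x (by simp [hx]))
          exact hstep u b (hwsupp u (by simp)) (hwsupp b (by simp)) hadj hPa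
      obtain ⟨⟨a, ha⟩⟩ := hKconn.nonempty
      by_cases haβ : a ∈ β t
      · -- case (i): K inside the leaf interior
        obtain ⟨hleaf, hanadh⟩ := hβS₀ a haβ (hKS₀ a ha)
        have hKsub : K ⊆ β t \ adhesion Tg β t := by
          intro v hv
          refine propagate (fun x => x ∈ β t \ adhesion Tg β t) ?_ a ha ⟨haβ, hanadh⟩ v hv
          intro x y hx hy hadj ⟨hx1, hx2⟩
          obtain ⟨s, hxs, hys⟩ := htd.1.2.2.1 x y hadj
          have hst : s = t := leaf_only_bag htd.1 hleaf hx1 hx2 s hxs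
          rw [hst] at hys
          refine ⟨hys, ?_⟩
          have := hβS₀ y hys (hKS₀ y hy)
          exact this.2
        by_contra hC
        exact badSet_subset_not_C hmc (badSet_of_not_C hnecl hmc hKconn hC) hKsub
          (htd.2 t hleaf)
      · by_cases haX : a ∈ X
        · -- case (ii): K inside the strict interior below t
          have hKsub : K ⊆ X \ β t := by
            intro v hv
            refine propagate (fun x => x ∈ X \ β t) ?_ a ha ⟨haX, haβ⟩ v hv
            intro x y hx hy hadj ⟨hx1, hx2⟩
            have hyX : y ∈ X := edge_Dset htd.1 hadj hx1 hx2
            refine ⟨hyX, ?_⟩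
            intro hyβ
            obtain ⟨hleaf, hynadh⟩ := hβS₀ y hyβ (hKS₀ y hy)
            obtain ⟨s, hys, hxs⟩ := htd.1.2.2.1 y x hadj.symm
            have hst : s = t := leaf_only_bag htd.1 hleaf hyβ hynadh s hys
            rw [hst] at hxs
            exact hx2 hxs
          by_contra hC
          exact no_bad_inner htree htd.1 hmin hKsub (badSet_of_not_C hnecl hmc hKconn hC)
        · -- case (iii): K outside X
          have hKsub : K ⊆ Xᶜ := by
            intro v hv
            refine propagate (fun x => x ∉ X) ?_ a ha haX v hv
            intro x y hx hy hadj hxP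
            intro hyX
            by_cases hyβ : y ∈ β t
            · obtain ⟨hleaf, hynadh⟩ := hβS₀ y hyβ (hKS₀ y hy)
              obtain ⟨s, hys, hxs⟩ := htd.1.2.2.1 y x hadj.symm
              have hst : s = t := leaf_only_bag htd.1 hleaf hyβ hynadh s hys
              rw [hst] at hxs
              exact hxP (hβX hxs)
            · exact hxP (edge_Dset htd.1 hadj.symm hyX hyβ)
          -- K lives in G' and avoids S'
          set A' : Set ↥Xᶜ := {v | v.1 ∈ K} with hA'
          have himg : Subtype.val '' A' = K := by
            apply Set.eq_of_subset_of_subset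
            · rintro x ⟨y, hy, rfl⟩; exact hy
            · intro x hx
              exact ⟨⟨x, hKsub hx⟩, hx, rfl⟩
          have hiso := isoInduceInduce G Xᶜ A'
          rw [himg] at hiso
          have hA'conn : (G'.induce A').Connected := hiso.connected_iff.mpr hKconn
          have hA'S' : A' ⊆ S'ᶜ := by
            intro v hv hc
            exact hKS' v.1 hv ⟨v, hc, rfl⟩
          have hCA' : C ↥A' (G'.induce A') :=
            C_of_connected_avoiding hmc hS'comps hA'conn hA'S'
          refine hmc _ _ _ _ ?_ hCA'
          exact IsMinorOf.congr_right hiso.symm (isMinorOf_refl _)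

end Aux

/-- **Inductive claim in the proof of Lemma 12.3.** Let `C` be a nonempty proper
minor-closed class, let `G` admit a `C`-tree decomposition of width at most `q`, and
suppose `G` does not contain `p + 1` pairwise vertex-disjoint subgraphs each containing,
as a minor, a member of `conn(Z)` for some `Z ∈ obs(C)`. Then some set `S` of at most
`(q + 1)(2p - 1)` vertices meets every such subgraph, i.e. every connected component of
`G - S` belongs to `C`. -/
theorem modulator_from_bounded_packing (C : GraphClass)
    (hne : NonemptyClass C) (hmc : MinorClosed C) (hproper : ProperClass C)
    {V : Type} [Finite V] (G : SimpleGraph V) (q p : ℕ) (hp : 1 ≤ p)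
    (hdec : ∃ (T : Type) (_ : Finite T) (Tg : SimpleGraph T) (β : T → Set V),
      IsHTreeDecomp C G Tg β ∧ HTDwidth Tg β ≤ q)
    (hpack : ¬ ∃ D : Fin (p + 1) → G.Subgraph,
      (∀ i j, i ≠ j → Disjoint (D i).verts (D j).verts) ∧
      ∀ i, ∃ (W : Type) (_ : Finite W) (Z Y : SimpleGraph W),
        IsObstruction C Z ∧ InConn Z Y ∧ Y.IsMinorOf (D i).coe) :
    ∃ S : Set V, S.ncard ≤ (q + 1) * (2 * p - 1) ∧ CompsIn C G S := by
  obtain ⟨T, instT, Tg, β, htd, hw⟩ := hdec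
  exact Aux.main_aux C hne hmc q p V ‹Finite V› G T instT Tg β htd hw hpack
end
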